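/- arXiv:math/0607623 — 5 statements merged into one kernel-verified Lean document; each statement's English description precedes it below -/
import Mathlib

section
/- Vanishing of mixed cumulants: if the index set {1,...,k} (k ≥ 2) splits into two non-empty disjoint subsets I and J such that the families (X_i)_{i∈I} and (X_j)_{j∈J} are independent, then the joint cumulant κ(X_1,...,X_k) = 0. -/
open Finset

/-- The joint cumulant of `(X_j)_{j∈S}`, defined from an abstract expectation
functional `m` (where `m B = E[Π_{j∈B} X_j]`) by the Möbius partition formula
`κ S = Σ_{π∈Π(S)} (|π|-1)!(-1)^{|π|-1} Π_{B∈π} m B`. -/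
noncomputable def jointCumulant {R : Type*} [CommRing R] {k : ℕ}
    (m : Finset (Fin k) → R) (S : Finset (Fin k)) : R :=
  ∑ π : Finpartition S,
    (Nat.factorial (π.parts.card - 1) : R) * (-1 : R) ^ (π.parts.card - 1) *
      ∏ B ∈ π.parts, m B

/-!
For `x ∈ S` the partition formula gives the moment–cumulant recursion
`m S = ∑_{x ∈ B ⊆ S} κ B * m (S \ B)`: a pair `(B, partition of B)` is the same thing as a
partition of `S` with a marked block `S \ B` avoiding `x` (or no marked block when `B = S`), and a
partition with `n` blocks collects the weight `μ n + (n - 1) μ (n - 1)`, where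
`μ n = (-1) ^ (n - 1) (n - 1)!`, and this is `0` unless `n = 1`.

If `S` meets both `I` and `J`, pick `x ∈ S ∩ I` and induct on `S`: in the recursion the mixed
blocks `B ≠ S` contribute nothing, and the blocks `B ⊆ I` factor as `m (S ∩ J)` times the
recursion for `S ∩ I`, so they add up to `m (S ∩ I) * m (S ∩ J) = m S`. Only `κ S` is left over.
-/

section Partitions

variable {α : Type*} [DecidableEq α] {S B D : Finset α} {P Q : Finset (Finset α)}

def partitionsOf (S : Finset α) : Finset (Finset (Finset α)) :=
  (univ : Finset (Finpartition S)).image Finpartition.parts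

theorem mem_partitionsOf : P ∈ partitionsOf S ↔ ∃ π : Finpartition S, π.parts = P := by
  simp [partitionsOf]

theorem sum_finpartition_eq_sum_partitionsOf {M : Type*} [AddCommMonoid M] (S : Finset α)
    (f : Finset (Finset α) → M) :
    ∑ π : Finpartition S, f π.parts = ∑ P ∈ partitionsOf S, f P := by
  rw [partitionsOf, sum_image fun _ _ _ _ h => Finpartition.ext h]

theorem empty_notMem_of_mem_partitionsOf (hQ : Q ∈ partitionsOf S) : ∅ ∉ Q := by
  obtain ⟨π, rfl⟩ := mem_partitionsOf.1 hQ
  exact π.empty_notMem_parts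

theorem subset_of_mem_partitionsOf (hQ : Q ∈ partitionsOf S) (hB : B ∈ Q) : B ⊆ S := by
  obtain ⟨π, rfl⟩ := mem_partitionsOf.1 hQ
  exact π.subset hB

theorem insert_sdiff_mem_partitionsOf (hBS : B ⊆ S) (hP : P ∈ partitionsOf B) :
    (insert (S \ B) P).erase ∅ ∈ partitionsOf S := by
  obtain ⟨π, rfl⟩ := mem_partitionsOf.1 hP
  refine mem_partitionsOf.2
    ⟨Finpartition.ofErase (insert (S \ B) π.parts) (π.supIndep.insert ?_) ?_, rfl⟩
  · rw [π.sup_parts]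
    exact sdiff_disjoint
  · rw [sup_insert, π.sup_parts]
    exact sdiff_union_of_subset hBS

theorem erase_erase_insert_sdiff_of_mem_partitionsOf (hP : P ∈ partitionsOf B) :
    ((insert (S \ B) P).erase ∅).erase (S \ B) = P := by
  have hP₀ := empty_notMem_of_mem_partitionsOf hP
  have hBP : S \ B ∉ P := fun h => by
    have h₀ : S \ B = ∅ :=
      disjoint_self.1 (sdiff_disjoint.mono_right (subset_of_mem_partitionsOf hP h))
    exact hP₀ (h₀ ▸ h)
  rw [erase_right_comm, erase_insert hBP, erase_eq_of_notMem hP₀]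

theorem erase_mem_partitionsOf (hQ : Q ∈ partitionsOf S) (hD : D ∈ Q) :
    Q.erase D ∈ partitionsOf (S \ D) := by
  obtain ⟨π, rfl⟩ := mem_partitionsOf.1 hQ
  have hsup : (π.parts.erase D).sup id = S \ D := by
    have hdisj := supIndep_iff_disjoint_erase.1 π.supIndep D hD
    have hS := π.sup_parts
    rw [← insert_erase hD, sup_insert] at hS
    conv_rhs => rw [← hS]
    exact (union_sdiff_cancel_left hdisj).symm
  exact mem_partitionsOf.2 ⟨π.ofSubset (erase_subset D _) hsup, rfl⟩

theorem filter_card_eq_one_partitionsOf (hS : S.Nonempty) :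
    {P ∈ partitionsOf S | #P = 1} = {{S}} := by
  ext P
  simp only [mem_filter, mem_singleton, card_eq_one]
  constructor
  · rintro ⟨hP, B, rfl⟩
    obtain ⟨π, hπ⟩ := mem_partitionsOf.1 hP
    have := π.sup_parts
    rw [hπ, sup_singleton] at this
    rw [← this]
    rfl
  · rintro rfl
    exact ⟨mem_partitionsOf.2 ⟨Finpartition.indiscrete hS.ne_empty, rfl⟩, S, rfl⟩

theorem card_filter_notMem_add_one_of_mem_partitionsOf {x : α} (hQ : Q ∈ partitionsOf S)
    (hx : x ∈ S) : #{B ∈ Q | x ∉ B} + 1 = #Q := by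
  obtain ⟨π, rfl⟩ := mem_partitionsOf.1 hQ
  have hblock : {B ∈ π.parts | x ∈ B} = {π.part x} := by
    ext B
    simp only [mem_filter, mem_singleton]
    constructor
    · rintro ⟨hB, hxB⟩
      exact ((π.part_eq_iff_mem hB).2 hxB).symm
    · rintro rfl
      exact ⟨π.part_mem.2 hx, π.mem_part_self.2 hx⟩
  have := card_filter_add_card_filter_not (s := π.parts) (fun B => x ∈ B)
  rw [hblock, card_singleton] at this
  omega

end Partitions

/-- `μ(π, 1̂)` in the lattice of partitions, for a partition `π` with `n` blocks. -/
def partitionMobius (R : Type*) [CommRing R] (n : ℕ) : R :=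
  (n - 1).factorial * (-1) ^ (n - 1)

section Recursion

variable {α R : Type*} [DecidableEq α] [CommRing R]

theorem partitionMobius_succ_add_mul (n : ℕ) :
    partitionMobius R (n + 1) + n * partitionMobius R n = if n = 0 then 1 else 0 := by
  cases n with
  | zero => simp [partitionMobius]
  | succ n =>
    simp only [partitionMobius, add_tsub_cancel_right, Nat.factorial_succ, pow_succ]
    push_cast
    ring

theorem sum_sigma_partitionsOf_eq_sum_sigma_erase {M : Type*} [AddCommMonoid M]
    {S : Finset α} {x : α} (hx : x ∈ S) (f : Finset α → Finset (Finset α) → M) :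
    ∑ BP ∈ {B ∈ S.powerset | x ∈ B}.sigma partitionsOf, f (S \ BP.1) BP.2 =
      ∑ QD ∈ (partitionsOf S).sigma (fun Q => insert ∅ {D ∈ Q | x ∉ D}),
        f QD.2 (QD.1.erase QD.2) := by
  refine sum_bij' (fun BP _ => ⟨(insert (S \ BP.1) BP.2).erase ∅, S \ BP.1⟩)
    (fun QD _ => ⟨S \ QD.2, QD.1.erase QD.2⟩) ?_ ?_ ?_ ?_ ?_
  · rintro ⟨B, P⟩ hBP
    obtain ⟨hB, hP⟩ : B ∈ _ ∧ P ∈ partitionsOf B := mem_sigma.1 hBP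
    obtain ⟨hBS, hxB⟩ := mem_filter.1 hB
    refine mem_sigma.2 ⟨insert_sdiff_mem_partitionsOf (mem_powerset.1 hBS) hP, ?_⟩
    by_cases h₀ : S \ B = ∅
    · exact h₀ ▸ mem_insert_self _ _
    · exact mem_insert_of_mem <| mem_filter.2
        ⟨mem_erase.2 ⟨h₀, mem_insert_self _ _⟩, fun h => (mem_sdiff.1 h).2 hxB⟩
  · rintro ⟨Q, D⟩ hQD
    obtain ⟨hQ, hD⟩ : Q ∈ _ ∧ D ∈ _ := mem_sigma.1 hQD
    rcases mem_insert.1 hD with rfl | hD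
    · simpa [erase_eq_of_notMem (empty_notMem_of_mem_partitionsOf hQ), hx] using hQ
    · obtain ⟨hDQ, hxD⟩ := mem_filter.1 hD
      exact mem_sigma.2 ⟨mem_filter.2 ⟨mem_powerset.2 sdiff_subset, mem_sdiff.2 ⟨hx, hxD⟩⟩,
        erase_mem_partitionsOf hQ hDQ⟩
  · rintro ⟨B, P⟩ hBP
    obtain ⟨hB, hP⟩ : B ∈ _ ∧ P ∈ partitionsOf B := mem_sigma.1 hBP
    simp only [Finset.sdiff_sdiff_eq_self (mem_powerset.1 (mem_filter.1 hB).1),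
      erase_erase_insert_sdiff_of_mem_partitionsOf hP]
  · rintro ⟨Q, D⟩ hQD
    obtain ⟨hQ, hD⟩ : Q ∈ _ ∧ D ∈ _ := mem_sigma.1 hQD
    have hQ₀ := empty_notMem_of_mem_partitionsOf hQ
    rcases mem_insert.1 hD with rfl | hD
    · simp [erase_eq_of_notMem hQ₀]
    · have hDQ := (mem_filter.1 hD).1
      simp only [Finset.sdiff_sdiff_eq_self (subset_of_mem_partitionsOf hQ hDQ),
        insert_erase hDQ, erase_eq_of_notMem hQ₀]
  · rintro ⟨B, P⟩ hBP
    rw [erase_erase_insert_sdiff_of_mem_partitionsOf (mem_sigma.1 hBP).2]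

theorem sum_erase_mul_of_mem_partitionsOf (m : Finset α → R) (hone : m ∅ = 1)
    {S : Finset α} {Q : Finset (Finset α)} {x : α} (hQ : Q ∈ partitionsOf S) (hx : x ∈ S) :
    ∑ D ∈ insert ∅ {D ∈ Q | x ∉ D},
        partitionMobius R #(Q.erase D) * (∏ B ∈ Q.erase D, m B) * m D =
      if #Q = 1 then ∏ B ∈ Q, m B else 0 := by
  have hQ₀ : ∅ ∉ Q := empty_notMem_of_mem_partitionsOf hQ
  have hblock : ∀ D ∈ {D ∈ Q | x ∉ D},
      partitionMobius R #(Q.erase D) * (∏ B ∈ Q.erase D, m B) * m D =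
        partitionMobius R (#Q - 1) * ∏ B ∈ Q, m B := by
    intro D hD
    rw [card_erase_of_mem (mem_filter.1 hD).1, mul_assoc, prod_erase_mul _ _ (mem_filter.1 hD).1]
  obtain ⟨n, hn⟩ : ∃ n, #{D ∈ Q | x ∉ D} = n := ⟨_, rfl⟩
  have hQn : #Q = n + 1 := hn ▸ (card_filter_notMem_add_one_of_mem_partitionsOf hQ hx).symm
  rw [sum_insert fun h => hQ₀ (mem_filter.1 h).1, erase_eq_of_notMem hQ₀, hone, mul_one,
    sum_congr rfl hblock, sum_const, nsmul_eq_mul, hn, hQn, add_tsub_cancel_right,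
    ← mul_assoc, ← add_mul, partitionMobius_succ_add_mul]
  simp

theorem sum_partitionsOf_mul_sdiff (m : Finset α → R) (hone : m ∅ = 1) {S : Finset α} {x : α}
    (hx : x ∈ S) :
    ∑ B ∈ S.powerset with x ∈ B,
      (∑ P ∈ partitionsOf B, partitionMobius R #P * ∏ C ∈ P, m C) * m (S \ B) = m S := by
  calc _ = ∑ BP ∈ {B ∈ S.powerset | x ∈ B}.sigma partitionsOf,
          partitionMobius R #BP.2 * (∏ C ∈ BP.2, m C) * m (S \ BP.1) := by
        rw [sum_sigma]
        simp only [sum_mul]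
    _ = ∑ QD ∈ (partitionsOf S).sigma (fun Q => insert ∅ {D ∈ Q | x ∉ D}),
          partitionMobius R #(QD.1.erase QD.2) * (∏ C ∈ QD.1.erase QD.2, m C) * m QD.2 :=
        sum_sigma_partitionsOf_eq_sum_sigma_erase hx
          (fun D P => partitionMobius R #P * (∏ C ∈ P, m C) * m D)
    _ = ∑ Q ∈ partitionsOf S, if #Q = 1 then ∏ B ∈ Q, m B else 0 := by
        rw [sum_sigma]
        exact sum_congr rfl fun Q hQ => sum_erase_mul_of_mem_partitionsOf m hone hQ hx
    _ = m S := by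
        rw [← sum_filter, filter_card_eq_one_partitionsOf ⟨x, hx⟩, sum_singleton, prod_singleton]

end Recursion

section Cumulants

variable {R : Type*} [CommRing R] {k : ℕ} {m : Finset (Fin k) → R}

theorem jointCumulant_eq_sum_partitionsOf (m : Finset (Fin k) → R) (S : Finset (Fin k)) :
    jointCumulant m S = ∑ P ∈ partitionsOf S, partitionMobius R #P * ∏ B ∈ P, m B :=
  sum_finpartition_eq_sum_partitionsOf S fun P => partitionMobius R #P * ∏ B ∈ P, m B

theorem sum_jointCumulant_mul_sdiff (hone : m ∅ = 1) {S : Finset (Fin k)} {x : Fin k}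
    (hx : x ∈ S) : ∑ B ∈ S.powerset with x ∈ B, jointCumulant m B * m (S \ B) = m S := by
  simp only [jointCumulant_eq_sum_partitionsOf]
  exact sum_partitionsOf_mul_sdiff m hone hx

theorem sum_filter_subset_jointCumulant_mul_sdiff (hone : m ∅ = 1) {I J : Finset (Fin k)}
    (hd : Disjoint I J) (hIJ : I ∪ J = univ)
    (hfact : ∀ S ⊆ I, ∀ T ⊆ J, m (S ∪ T) = m S * m T) {S : Finset (Fin k)} {x : Fin k}
    (hx : x ∈ S ∩ I) :
    ∑ B ∈ S.powerset with x ∈ B ∧ B ⊆ I, jointCumulant m B * m (S \ B) = m S := by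
  have hsplit : ∀ B ⊆ I, S \ B = (S ∩ I) \ B ∪ S ∩ J := by
    intro B hB
    ext y
    have hy : y ∈ I ∪ J := hIJ ▸ mem_univ y
    have hyJ := @disjoint_left.1 hd y
    have hyB := @hB y
    simp only [mem_sdiff, mem_union, mem_inter] at hy ⊢
    tauto
  have hfilter : {B ∈ S.powerset | x ∈ B ∧ B ⊆ I} = {B ∈ (S ∩ I).powerset | x ∈ B} := by
    ext B
    simp only [mem_filter, mem_powerset, subset_inter_iff]
    tauto
  calc _ = ∑ B ∈ (S ∩ I).powerset with x ∈ B,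
            jointCumulant m B * m ((S ∩ I) \ B) * m (S ∩ J) := by
        rw [hfilter]
        refine sum_congr rfl fun B hB => ?_
        have hBI := (subset_inter_iff.1 (mem_powerset.1 (mem_filter.1 hB).1)).2
        rw [hsplit B hBI, hfact _ (sdiff_subset.trans inter_subset_right) _ inter_subset_right,
          mul_assoc]
    _ = m (S ∩ I) * m (S ∩ J) := by rw [← sum_mul, sum_jointCumulant_mul_sdiff hone hx]
    _ = m S := by
        rw [← hfact _ inter_subset_right _ inter_subset_right, ← inter_union_distrib_left, hIJ,
          inter_univ]

theorem jointCumulant_eq_zero_of_inter_nonempty (hone : m ∅ = 1) {I J : Finset (Fin k)}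
    (hd : Disjoint I J) (hIJ : I ∪ J = univ)
    (hfact : ∀ S ⊆ I, ∀ T ⊆ J, m (S ∪ T) = m S * m T) (S : Finset (Fin k))
    (hSI : (S ∩ I).Nonempty) (hSJ : (S ∩ J).Nonempty) : jointCumulant m S = 0 := by
  induction S using Finset.strongInduction with
  | H S ih =>
    obtain ⟨x, hx⟩ := hSI
    have hxI := (mem_inter.1 hx).2
    have hS_mixed : S ∈ {B ∈ S.powerset | x ∈ B ∧ ¬B ⊆ I} := by
      obtain ⟨y, hy⟩ := hSJ
      exact mem_filter.2 ⟨mem_powerset_self S, (mem_inter.1 hx).1, fun hSsubI =>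
        disjoint_left.1 hd (hSsubI (mem_inter.1 hy).1) (mem_inter.1 hy).2⟩
    have hmixed : ∑ B ∈ S.powerset with x ∈ B ∧ ¬B ⊆ I, jointCumulant m B * m (S \ B) =
        jointCumulant m S := by
      rw [sum_eq_single_of_mem S hS_mixed, Finset.sdiff_self, hone, mul_one]
      intro B hB hBne
      obtain ⟨hBS, hxB, hBI⟩ := mem_filter.1 hB
      obtain ⟨y, hyB, hyI⟩ := not_subset.1 hBI
      have hyJ : y ∈ J := (mem_union.1 (hIJ ▸ mem_univ y)).resolve_left hyI
      rw [ih B (ssubset_of_subset_of_ne (mem_powerset.1 hBS) hBne)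
        ⟨x, mem_inter.2 ⟨hxB, hxI⟩⟩ ⟨y, mem_inter.2 ⟨hyB, hyJ⟩⟩, zero_mul]
    have hrec := sum_jointCumulant_mul_sdiff hone (mem_inter.1 hx).1
    rw [← sum_filter_add_sum_filter_not _ (· ⊆ I), filter_filter, filter_filter,
      sum_filter_subset_jointCumulant_mul_sdiff hone hd hIJ hfact hx, hmixed] at hrec
    simpa using hrec

end Cumulants

theorem mixed_cumulant_vanishes_general {R : Type*} [CommRing R]
    (k : ℕ) (m : Finset (Fin k) → R) (hone : m ∅ = 1)
    (I J : Finset (Fin k)) (hI : I.Nonempty) (hJ : J.Nonempty)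
    (hd : Disjoint I J) (hIJ : I ∪ J = Finset.univ)
    (hfact : ∀ S ⊆ I, ∀ T ⊆ J, m (S ∪ T) = m S * m T) :
    jointCumulant m (Finset.univ : Finset (Fin k)) = 0 :=
  jointCumulant_eq_zero_of_inter_nonempty hone hd hIJ hfact univ (by simpa using hI)
    (by simpa using hJ)

/-- Vanishing of mixed cumulants: if `{1,…,k}` (`k ≥ 2`) splits into two
non-empty disjoint sets `I`, `J` such that the expectation factorizes over the
two groups, then the joint cumulant `κ(X_1,…,X_k)` vanishes. -/
theorem mixed_cumulant_vanishes {R : Type*} [CommRing R]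
    (k : ℕ) (hk : 2 ≤ k) (m : Finset (Fin k) → R) (hone : m ∅ = 1)
    (I J : Finset (Fin k)) (hI : I.Nonempty) (hJ : J.Nonempty)
    (hd : Disjoint I J) (hIJ : I ∪ J = Finset.univ)
    (hfact : ∀ S ⊆ I, ∀ T ⊆ J, m (S ∪ T) = m S * m T) :
    jointCumulant m (Finset.univ : Finset (Fin k)) = 0 :=
  mixed_cumulant_vanishes_general k m hone I J hI hJ hd hIJ hfact
end

section
/- Generalized cumulants formula: for any partition π = {B_1,...,B_m} of {1,...,i}, the generalized cumulant κ_π := κ(Π_{j∈B_1} X_j, ..., Π_{j∈B_m} X_j) satisfies κ_π = Σ_{ρ∈Π_i, ρ ≥ π} (-1)^{|ρ|-1}(|ρ|-1)! Π_{C∈ρ} E[Π_{j∈C} X_j]. -/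
/-!
Merging the blocks of `π` along a partition `τ` of its set of blocks gives a partition of
`{1,…,i}` coarser than `π`, and every coarser partition `ρ` arises from exactly one `τ`: the one
grouping together the blocks of `π` that lie in a common block of `ρ`. Since the union map is
injective on the blocks of `τ`, this bijection preserves the number of blocks and turns
`∏ A ∈ τ, m (⋃ A)` into `∏ C ∈ ρ, m C`, so the two Möbius sums agree term by term.
-/

open Finset
open scoped Classical

/-- The generalized cumulant `κ_π` of McCullagh: for a partition
`π = {B_1,…,B_m}` of `{1,…,i}` this is the joint cumulant
`κ(Π_{j∈B_1} X_j, …, Π_{j∈B_m} X_j)`, expressed via the Möbius partition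
formula over partitions `τ` of the set of blocks of `π`; the moment of a
product of blocks `A ⊆ π.parts` is `m (⋃ A)`. -/
noncomputable def genCumulant {R : Type*} [CommRing R] {i : ℕ}
    (m : Finset (Fin i) → R) (π : Finpartition (Finset.univ : Finset (Fin i))) : R :=
  ∑ τ : Finpartition π.parts,
    (Nat.factorial (τ.parts.card - 1) : R) * (-1 : R) ^ (τ.parts.card - 1) *
      ∏ A ∈ τ.parts, m (A.sup id)

namespace Finpartition

variable {α : Type*} [DecidableEq α] {s : Finset α} (P : Finpartition s)

lemma subset_of_le_of_mem {Q : Finpartition s} (h : P ≤ Q) {B C : Finset α} {a : α}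
    (hB : B ∈ P.parts) (hC : C ∈ Q.parts) (haB : a ∈ B) (haC : a ∈ C) : B ⊆ C := by
  obtain ⟨C', hC', hBC'⟩ := h hB
  rwa [Q.eq_of_mem_parts hC hC' haC (hBC' haB)]

section Coarsen

variable {P} (Q : Finpartition P.parts)

lemma disjoint_sup_of_mem_parts {A A' : Finset (Finset α)} (hA : A ∈ Q.parts)
    (hA' : A' ∈ Q.parts) (hne : A ≠ A') : Disjoint (A.sup id) (A'.sup id) :=
  P.supIndep.disjoint_sup_sup (Q.le hA) (Q.le hA') (Q.disjoint hA hA' hne)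

lemma sup_ne_empty_of_mem_parts {A : Finset (Finset α)} (hA : A ∈ Q.parts) : A.sup id ≠ ∅ := by
  obtain ⟨B, hB⟩ := Q.nonempty_of_mem_parts hA
  exact fun h => P.ne_empty (Q.le hA hB) (subset_empty.1 (h ▸ le_sup (f := id) hB))

lemma injOn_sup : Set.InjOn (fun A : Finset (Finset α) => A.sup id) Q.parts := by
  intro A hA A' hA' h
  by_contra hne
  have := disjoint_sup_of_mem_parts Q hA hA' hne
  rw [show A.sup id = A'.sup id from h, disjoint_self] at this
  exact sup_ne_empty_of_mem_parts Q hA' this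

def coarsen : Finpartition s where
  parts := Q.parts.image fun A => A.sup id
  supIndep := by
    rw [supIndep_iff_pairwiseDisjoint, coe_image, (injOn_sup Q).pairwiseDisjoint_image]
    exact fun A hA A' hA' hne => disjoint_sup_of_mem_parts Q hA hA' hne
  sup_parts := by
    have hunion : Q.parts.biUnion (fun A => A) = P.parts := Q.biUnion_parts
    rw [sup_image, Function.id_comp, ← sup_biUnion, hunion, P.sup_parts]
  bot_notMem := by
    simp only [bot_eq_empty, mem_image, not_exists, not_and]
    exact fun A hA => sup_ne_empty_of_mem_parts Q hA

lemma coarsen_parts : (coarsen Q).parts = Q.parts.image fun A => A.sup id := rfl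

lemma le_coarsen : P ≤ coarsen Q := by
  intro B hB
  obtain ⟨A, hA, hBA⟩ := Q.exists_mem hB
  exact ⟨A.sup id, mem_image_of_mem _ hA, le_sup (f := id) hBA⟩

lemma card_coarsen_parts : #(coarsen Q).parts = #Q.parts :=
  card_image_of_injOn (injOn_sup Q)

lemma prod_coarsen_parts {M : Type*} [CommMonoid M] (f : Finset α → M) :
    ∏ C ∈ (coarsen Q).parts, f C = ∏ A ∈ Q.parts, f (A.sup id) :=
  prod_image (injOn_sup Q)

lemma filter_subset_sup {A : Finset (Finset α)} (hA : A ∈ Q.parts) :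
    P.parts.filter (· ⊆ A.sup id) = A := by
  ext B
  refine ⟨fun hB => ?_, fun hB => mem_filter.2 ⟨Q.le hA hB, le_sup (f := id) hB⟩⟩
  obtain ⟨hBP, hBA⟩ := mem_filter.1 hB
  obtain ⟨A', hA', hBA'⟩ := Q.exists_mem hBP
  obtain ⟨a, ha⟩ := P.nonempty_of_mem_parts hBP
  obtain rfl : A = A' := by
    by_contra hne
    exact disjoint_left.1 (disjoint_sup_of_mem_parts Q hA hA' hne) (hBA ha)
      (mem_sup.2 ⟨B, hBA', ha⟩)
  exact hBA'

end Coarsen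

section PartsPartition

variable {P} {Q : Finpartition s}

lemma sup_filter_subset (h : P ≤ Q) {C : Finset α} (hC : C ∈ Q.parts) :
    (P.parts.filter (· ⊆ C)).sup id = C := by
  refine le_antisymm (Finset.sup_le fun B hB => (mem_filter.1 hB).2) fun a ha => ?_
  obtain ⟨B, hB, haB⟩ := P.exists_mem (Q.subset hC ha)
  exact mem_sup.2 ⟨B, mem_filter.2 ⟨hB, P.subset_of_le_of_mem h hB hC haB ha⟩, haB⟩

def partsPartition (h : P ≤ Q) : Finpartition P.parts :=
  ofExistsUnique (Q.parts.image fun C => P.parts.filter (· ⊆ C))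
    (by
      simp only [mem_image, forall_exists_index, and_imp]
      rintro _ C - rfl
      exact filter_subset _ _)
    (by
      intro B hB
      obtain ⟨C, hC, hBC⟩ := h hB
      refine ⟨_, ⟨mem_image_of_mem _ hC, mem_filter.2 ⟨hB, hBC⟩⟩, ?_⟩
      simp only [mem_image, and_imp, forall_exists_index]
      rintro _ C' hC' rfl hBC'
      obtain ⟨a, ha⟩ := P.nonempty_of_mem_parts hB
      rw [Q.eq_of_mem_parts hC' hC ((mem_filter.1 hBC').2 ha) (hBC ha)])
    (by
      simp only [mem_image, not_exists, not_and]
      intro C hC hempty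
      exact Q.ne_empty hC (by rw [← sup_filter_subset h hC, hempty, sup_empty]; rfl))

lemma partsPartition_parts (h : P ≤ Q) :
    (partsPartition h).parts = Q.parts.image fun C => P.parts.filter (· ⊆ C) := rfl

end PartsPartition

def coarsenEquiv : Finpartition P.parts ≃ {Q : Finpartition s // P ≤ Q} where
  toFun Q := ⟨coarsen Q, le_coarsen Q⟩
  invFun Q := partsPartition Q.2
  left_inv Q := by
    ext1
    rw [partsPartition_parts, coarsen_parts, image_image]
    exact (image_congr fun A hA => filter_subset_sup Q hA).trans image_id
  right_inv Q := by
    ext1; ext1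
    rw [coarsen_parts, partsPartition_parts, image_image]
    exact (image_congr fun C hC => sup_filter_subset Q.2 hC).trans image_id

end Finpartition

/-- Generalized cumulants in terms of moments: for any partition `π` of
`{1,…,i}`, `κ_π = Σ_{ρ ≥ π} (-1)^{|ρ|-1}(|ρ|-1)! Π_{C∈ρ} E[Π_{j∈C} X_j]`,
the sum being over the partitions `ρ` coarser than `π`. -/
theorem genCumulant_eq_sum_coarser {R : Type*} [CommRing R]
    (i : ℕ) (m : Finset (Fin i) → R)
    (π : Finpartition (Finset.univ : Finset (Fin i))) :
    genCumulant m π =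
      ∑ ρ ∈ (Finset.univ : Finset (Finpartition (Finset.univ : Finset (Fin i)))).filter
          (fun ρ => ∀ B ∈ π.parts, ∃ C ∈ ρ.parts, B ⊆ C),
        (-1 : R) ^ (ρ.parts.card - 1) * (Nat.factorial (ρ.parts.card - 1) : R) *
          ∏ C ∈ ρ.parts, m C := by
  have hcoarser (ρ : Finpartition (univ : Finset (Fin i))) :
      ρ ∈ univ.filter (fun ρ => ∀ B ∈ π.parts, ∃ C ∈ ρ.parts, B ⊆ C) ↔ π ≤ ρ := by
    rw [mem_filter, and_iff_right (mem_univ ρ)]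
    rfl
  rw [genCumulant, sum_subtype _ hcoarser]
  refine Fintype.sum_equiv π.coarsenEquiv _ _ fun τ => ?_
  simp only [Finpartition.coarsenEquiv, Equiv.coe_fn_mk, Finpartition.card_coarsen_parts,
    Finpartition.prod_coarsen_parts]
  ring
end

section
/- McCullagh's formula: for any partition π of {1,...,i}, the generalized cumulant satisfies κ_π = Σ_{ρ∈Π_i : ρ∨π = 1̂} Π_{C∈ρ} κ((X_j)_{j∈C}), where ρ∨π is the join in the partition lattice and 1̂ is the one-block partition. -/
/-!
Coarsenings of `π` correspond to partitions of its set of blocks, so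
`κ_π = ∑_{σ ≥ π} μ(σ, 1̂) ∏_{T ∈ σ} m(T)` with `μ(σ, 1̂) = (-1)^(|σ|-1) (|σ|-1)!`. Expanding each
moment `m(T)` by the moment–cumulant relation turns the product into a sum over the refinements
`ρ ≤ σ`; exchanging the two sums leaves for each `ρ` the coefficient `∑_{σ ≥ ρ ∨ π} μ(σ, 1̂)`. By
the same correspondence this is the sum of `μ` over all partitions of the set of blocks of `ρ ∨ π`,
which vanishes unless `ρ ∨ π` has a single block: adding a point to a set either opens a new block
or joins one of the `k` existing ones, and `μ(k + 1) + k μ(k) = 0` for `k ≥ 1`.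
-/

open Finset
open scoped Classical

/-- `ρ ∨ π = 1̂` in the partition lattice: the equivalence relation generated
by "lying in a common block of `ρ` or of `π`" identifies all points. -/
def JoinEqTop {i : ℕ} (ρ π : Finpartition (Finset.univ : Finset (Fin i))) : Prop :=
  ∀ x y : Fin i,
    Relation.EqvGen
      (fun a b => (∃ B ∈ ρ.parts, a ∈ B ∧ b ∈ B) ∨ ∃ B ∈ π.parts, a ∈ B ∧ b ∈ B) x y

namespace Finpartition

variable {β : Type*} [DecidableEq β] {u : Finset β}

section Coarsening

variable (P : Finpartition u)

lemma mem_of_subset_sup_id {A : Finset (Finset β)} (hA : A ⊆ P.parts) {B : Finset β}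
    (hB : B ∈ P.parts) (hBA : B ⊆ A.sup id) : B ∈ A := by
  obtain ⟨b, hb⟩ := P.nonempty_of_mem_parts hB
  obtain ⟨B', hB', hbB'⟩ := mem_sup.1 (hBA hb)
  rwa [P.eq_of_mem_parts hB (hA hB') hb hbB']

lemma filter_subset_sup_id {A : Finset (Finset β)} (hA : A ⊆ P.parts) :
    P.parts.filter (· ⊆ A.sup id) = A := by
  ext B
  refine ⟨fun h => ?_, fun hB => mem_filter.2 ⟨hA hB, le_sup (f := id) hB⟩⟩
  obtain ⟨hB, hBA⟩ := mem_filter.1 h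
  exact P.mem_of_subset_sup_id hA hB hBA

lemma subset_of_le {σ : Finpartition u} (h : P ≤ σ) {B T : Finset β} (hB : B ∈ P.parts)
    (hT : T ∈ σ.parts) {b : β} (hbB : b ∈ B) (hbT : b ∈ T) : B ⊆ T := by
  obtain ⟨T', hT', hBT'⟩ := h hB
  rwa [σ.eq_of_mem_parts hT hT' hbT (hBT' hbB)]

lemma sup_id_filter_subset {σ : Finpartition u} (h : P ≤ σ) {T : Finset β} (hT : T ∈ σ.parts) :
    (P.parts.filter (· ⊆ T)).sup id = T := by
  ext b
  refine ⟨fun hb => ?_, fun hb => ?_⟩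
  · obtain ⟨B, hB, hbB⟩ := mem_sup.1 hb
    exact (mem_filter.1 hB).2 hbB
  · obtain ⟨B, hB, hbB⟩ := P.exists_mem (σ.le hT hb)
    exact mem_sup.2 ⟨B, mem_filter.2 ⟨hB, P.subset_of_le h hB hT hbB hb⟩, hbB⟩

lemma disjoint_sup_id {A A' : Finset (Finset β)} (hA : A ⊆ P.parts) (hA' : A' ⊆ P.parts)
    (h : Disjoint A A') : Disjoint (A.sup id) (A'.sup id) := by
  rw [Finset.disjoint_sup_left]
  intro B hB
  rw [Finset.disjoint_sup_right]
  exact fun B' hB' => P.disjoint (hA hB) (hA' hB') (fun e => disjoint_right.1 h hB' (e ▸ hB))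

def merge (τ : Finpartition P.parts) : Finpartition u where
  parts := τ.parts.image (·.sup id)
  supIndep := by
    rw [supIndep_iff_pairwiseDisjoint]
    simp only [coe_image]
    rintro _ ⟨A, hA, rfl⟩ _ ⟨A', hA', rfl⟩ hne
    exact P.disjoint_sup_id (τ.le hA) (τ.le hA') (τ.disjoint hA hA' (by rintro rfl; exact hne rfl))
  sup_parts := by
    rw [sup_image, Function.id_comp, ← sup_biUnion, ← sup_eq_biUnion]
    exact (congrArg (·.sup id) τ.sup_parts).trans P.sup_parts
  bot_notMem := by
    simp only [bot_eq_empty, mem_image, not_exists, not_and]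
    intro A hA hempty
    obtain ⟨B, hB⟩ := τ.nonempty_of_mem_parts hA
    obtain ⟨b, hb⟩ := P.nonempty_of_mem_parts (τ.le hA hB)
    have hbA : b ∈ A.sup id := mem_sup.2 ⟨B, hB, hb⟩
    simp [hempty] at hbA

@[simp] lemma merge_parts (τ : Finpartition P.parts) :
    (P.merge τ).parts = τ.parts.image (·.sup id) := rfl

lemma le_merge (τ : Finpartition P.parts) : P ≤ P.merge τ := by
  intro B hB
  obtain ⟨A, hA, hBA⟩ := τ.exists_mem hB
  exact ⟨A.sup id, mem_image_of_mem _ hA, le_sup (f := id) hBA⟩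

lemma injOn_sup_id (τ : Finpartition P.parts) :
    Set.InjOn (fun A : Finset (Finset β) => A.sup id) τ.parts := by
  intro A hA A' hA' h
  rw [← P.filter_subset_sup_id (τ.le hA), ← P.filter_subset_sup_id (τ.le hA')]
  simp only at h
  rw [h]

lemma card_merge (τ : Finpartition P.parts) : #(P.merge τ).parts = #τ.parts :=
  card_image_of_injOn (P.injOn_sup_id τ)

lemma prod_merge {M : Type*} [CommMonoid M] (τ : Finpartition P.parts) (g : Finset β → M) :
    ∏ T ∈ (P.merge τ).parts, g T = ∏ A ∈ τ.parts, g (A.sup id) :=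
  prod_image (P.injOn_sup_id τ)

def split {σ : Finpartition u} (h : P ≤ σ) : Finpartition P.parts where
  parts := σ.parts.image fun T => P.parts.filter (· ⊆ T)
  supIndep := by
    rw [supIndep_iff_pairwiseDisjoint]
    simp only [coe_image]
    rintro _ ⟨T, hT, rfl⟩ _ ⟨T', hT', rfl⟩ hne
    refine disjoint_left.2 fun B hB hB' => hne ?_
    obtain ⟨b, hb⟩ := P.nonempty_of_mem_parts (mem_filter.1 hB).1
    rw [σ.eq_of_mem_parts hT hT' ((mem_filter.1 hB).2 hb) ((mem_filter.1 hB').2 hb)]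
  sup_parts := by
    refine Subset.antisymm (fun B hB => ?_) fun B hB => ?_
    · obtain ⟨X, hX, hBX⟩ := mem_sup.1 hB
      obtain ⟨T, -, rfl⟩ := mem_image.1 hX
      exact filter_subset _ _ hBX
    · obtain ⟨T, hT, hBT⟩ := h hB
      exact mem_sup.2 ⟨_, mem_image_of_mem _ hT, mem_filter.2 ⟨hB, hBT⟩⟩
  bot_notMem := by
    simp only [bot_eq_empty, mem_image, not_exists, not_and]
    intro T hT hempty
    obtain ⟨b, hb⟩ := σ.nonempty_of_mem_parts hT
    obtain ⟨B, hB, hbB⟩ := P.exists_mem (σ.le hT hb)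
    have hBT : B ∈ P.parts.filter (· ⊆ T) := mem_filter.2 ⟨hB, P.subset_of_le h hB hT hbB hb⟩
    simp [hempty] at hBT

lemma merge_split {σ : Finpartition u} (h : P ≤ σ) : P.merge (P.split h) = σ := by
  ext1
  simp only [merge_parts, split, image_image, Function.comp_def]
  rw [image_congr fun T hT => P.sup_id_filter_subset h hT, image_id']

lemma split_merge (τ : Finpartition P.parts) : P.split (P.le_merge τ) = τ := by
  ext1
  simp only [split, merge_parts, image_image, Function.comp_def]
  rw [image_congr fun A hA => P.filter_subset_sup_id (τ.le hA), image_id']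

def coarseningEquiv : {σ : Finpartition u // P ≤ σ} ≃ Finpartition P.parts where
  toFun σ := P.split σ.2
  invFun τ := ⟨P.merge τ, P.le_merge τ⟩
  left_inv σ := Subtype.ext (P.merge_split σ.2)
  right_inv := P.split_merge

lemma sum_filter_le_eq_sum_merge {M : Type*} [AddCommMonoid M] (f : Finpartition u → M) :
    ∑ σ ∈ univ.filter (P ≤ ·), f σ = ∑ τ : Finpartition P.parts, f (P.merge τ) := by
  rw [sum_subtype (p := (P ≤ ·)) _ (fun σ => by simp)]
  exact Fintype.sum_equiv P.coarseningEquiv _ _ fun σ => by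
    rw [coarseningEquiv, Equiv.coe_fn_mk, P.merge_split]

end Coarsening

section Refinement

variable (σ : Finpartition u)

lemma mem_restrict_parts (P : Finpartition u) {t : Finset β} (ht : t ⊆ u) {C : Finset β} :
    C ∈ (P.restrict ht).parts ↔ C.Nonempty ∧ ∃ D ∈ P.parts, D ∩ t = C := by
  simp [restrict, nonempty_iff_ne_empty, and_comm]

lemma mem_restrict_parts_of_le {ρ : Finpartition u} (h : ρ ≤ σ) {T : Finset β} (hT : T ∈ σ.parts)
    {C : Finset β} : C ∈ (ρ.restrict (σ.le hT)).parts ↔ C ∈ ρ.parts ∧ C ⊆ T := by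
  rw [mem_restrict_parts]
  constructor
  · rintro ⟨⟨c, hc⟩, D, hD, rfl⟩
    obtain ⟨hcD, hcT⟩ := mem_inter.1 hc
    have hDT := ρ.subset_of_le h hD hT hcD hcT
    rw [inter_eq_left.2 hDT]
    exact ⟨hD, hDT⟩
  · rintro ⟨hC, hCT⟩
    exact ⟨ρ.nonempty_of_mem_parts hC, C, hC, inter_eq_left.2 hCT⟩

lemma bind_le (Q : ∀ T ∈ σ.parts, Finpartition T) : σ.bind Q ≤ σ := by
  intro C hC
  obtain ⟨T, hT, hCT⟩ := mem_bind.1 hC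
  exact ⟨T, hT, (Q T hT).le hCT⟩

lemma restrict_bind (Q : ∀ T ∈ σ.parts, Finpartition T) {T : Finset β} (hT : T ∈ σ.parts) :
    (σ.bind Q).restrict (σ.le hT) = Q T hT := by
  ext C
  rw [mem_restrict_parts_of_le σ (σ.bind_le Q) hT, mem_bind]
  constructor
  · rintro ⟨⟨T', hT', hC⟩, hCT⟩
    obtain ⟨c, hc⟩ := (Q T' hT').nonempty_of_mem_parts hC
    obtain rfl := σ.eq_of_mem_parts hT' hT ((Q T' hT').le hC hc) (hCT hc)
    exact hC
  · intro hC
    exact ⟨⟨T, hT, hC⟩, (Q T hT).le hC⟩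

lemma bind_restrict {ρ : Finpartition u} (h : ρ ≤ σ) :
    σ.bind (fun _ hT => ρ.restrict (σ.le hT)) = ρ := by
  ext C
  rw [mem_bind]
  constructor
  · rintro ⟨T, hT, hC⟩
    exact ((σ.mem_restrict_parts_of_le h hT).1 hC).1
  · intro hC
    obtain ⟨T, hT, hCT⟩ := h hC
    exact ⟨T, hT, (σ.mem_restrict_parts_of_le h hT).2 ⟨hC, hCT⟩⟩

def refinementEquiv : {ρ : Finpartition u // ρ ≤ σ} ≃ ∀ T : σ.parts, Finpartition T.1 where
  toFun ρ T := ρ.1.restrict (σ.le T.2)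
  invFun Q := ⟨σ.bind fun T hT => Q ⟨T, hT⟩, σ.bind_le _⟩
  left_inv ρ := Subtype.ext (σ.bind_restrict ρ.2)
  right_inv _ := funext fun T => σ.restrict_bind _ T.2

lemma prod_bind {M : Type*} [CommMonoid M] (Q : ∀ T ∈ σ.parts, Finpartition T)
    (g : Finset β → M) :
    ∏ C ∈ (σ.bind Q).parts, g C = ∏ T : σ.parts, ∏ D ∈ (Q T T.2).parts, g D := by
  rw [bind_parts, prod_biUnion, univ_eq_attach]
  intro T _ T' _ hne
  refine disjoint_left.2 fun D hD hD' => hne (Subtype.ext ?_)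
  obtain ⟨d, hd⟩ := (Q T T.2).nonempty_of_mem_parts hD
  exact σ.eq_of_mem_parts T.2 T'.2 ((Q T T.2).le hD hd) ((Q T' T'.2).le hD' hd)

lemma prod_sum_eq_sum_filter_le {R : Type*} [CommSemiring R] (g : Finset β → R) :
    ∏ T ∈ σ.parts, ∑ p : Finpartition T, ∏ D ∈ p.parts, g D =
      ∑ ρ ∈ univ.filter (· ≤ σ), ∏ C ∈ ρ.parts, g C := by
  rw [← prod_coe_sort, Fintype.prod_sum, sum_subtype (p := (· ≤ σ)) _ (fun ρ => by simp)]
  exact Fintype.sum_equiv σ.refinementEquiv.symm _ _ fun Q =>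
    (σ.prod_bind (fun T hT => Q ⟨T, hT⟩) g).symm

end Refinement

section Insert

variable {a : β} {t : Finset β}

lemma subset_of_mem_insert_empty_parts (υ : Finpartition t) {B : Finset β}
    (hB : B ∈ insert ∅ υ.parts) : B ⊆ t := by
  rcases mem_insert.1 hB with rfl | hB
  · exact empty_subset t
  · exact υ.le hB

/-- Adds `a` to the block `B` of `υ`; `B = ∅` encodes a new singleton block `{a}`. -/
def insertInto (υ : Finpartition t) (ha : a ∉ t) {B : Finset β} (hB : B ∈ insert ∅ υ.parts) :
    Finpartition (insert a t) where
  parts := insert (insert a B) (υ.parts.erase B)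
  supIndep := by
    rw [supIndep_iff_pairwiseDisjoint, coe_insert, Set.pairwiseDisjoint_insert]
    refine ⟨υ.disjoint.subset (by simp), fun C hC _ => ?_⟩
    obtain ⟨hCB, hC⟩ := mem_erase.1 hC
    refine disjoint_insert_left.2 ⟨fun haC => ha (υ.le hC haC), ?_⟩
    rcases mem_insert.1 hB with rfl | hB
    · exact disjoint_empty_left C
    · exact υ.disjoint hB hC (Ne.symm hCB)
  sup_parts := by
    rw [sup_insert, id, sup_eq_union, insert_union]
    congr 1
    rcases mem_insert.1 hB with rfl | hB
    · rw [erase_eq_of_notMem υ.empty_notMem_parts, empty_union, υ.sup_parts]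
    · conv_rhs => rw [← υ.sup_parts, ← insert_erase hB, sup_insert]
      rfl
  bot_notMem := by
    simp only [bot_eq_empty, mem_insert, mem_erase, not_or]
    exact ⟨(insert_ne_empty a B).symm, fun h => υ.empty_notMem_parts h.2⟩

@[simp] lemma insertInto_parts (υ : Finpartition t) (ha : a ∉ t) {B : Finset β}
    (hB : B ∈ insert ∅ υ.parts) :
    (υ.insertInto ha hB).parts = insert (insert a B) (υ.parts.erase B) := rfl

lemma part_insertInto (υ : Finpartition t) (ha : a ∉ t) {B : Finset β}
    (hB : B ∈ insert ∅ υ.parts) : (υ.insertInto ha hB).part a = insert a B :=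
  part_eq_of_mem _ (mem_insert_self _ _) (mem_insert_self a B)

lemma card_insertInto_parts (υ : Finpartition t) (ha : a ∉ t) {B : Finset β}
    (hB : B ∈ insert ∅ υ.parts) : #(υ.insertInto ha hB).parts = #(υ.parts.erase B) + 1 :=
  card_insert_of_notMem fun h => ha (υ.le (mem_of_mem_erase h) (mem_insert_self a B))

lemma mem_restrict_insert_parts (υ : Finpartition (insert a t)) (ha : a ∉ t) {C : Finset β} :
    C ∈ (υ.restrict (subset_insert a t)).parts ↔ C.Nonempty ∧ ∃ D ∈ υ.parts, D.erase a = C := by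
  have hD : ∀ D ∈ υ.parts, D ∩ t = D.erase a := fun D hD => by
    ext x
    have : x ∈ D → x ∈ insert a t := fun h => υ.le hD h
    grind
  rw [mem_restrict_parts]
  grind

lemma restrict_insertInto (υ : Finpartition t) (ha : a ∉ t) {B : Finset β}
    (hB : B ∈ insert ∅ υ.parts) : (υ.insertInto ha hB).restrict (subset_insert a t) = υ := by
  have haB : a ∉ B := fun h => ha (υ.subset_of_mem_insert_empty_parts hB h)
  have hD : ∀ D ∈ υ.parts, a ∉ D := fun D hD h => ha (υ.le hD h)
  ext C
  rw [mem_restrict_insert_parts _ ha, insertInto_parts]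
  simp only [exists_mem_insert, erase_insert haB, mem_erase]
  constructor
  · rintro ⟨hC, rfl | ⟨D, ⟨-, hD'⟩, rfl⟩⟩
    · rcases mem_insert.1 hB with rfl | hB
      · exact absurd hC not_nonempty_empty
      · exact hB
    · rwa [erase_eq_of_notMem (hD D hD')]
  · intro hC
    refine ⟨υ.nonempty_of_mem_parts hC, ?_⟩
    by_cases hCB : C = B
    · exact Or.inl hCB.symm
    · exact Or.inr ⟨C, ⟨hCB, hC⟩, erase_eq_of_notMem (hD C hC)⟩

lemma erase_part_mem_insert_empty (υ : Finpartition (insert a t)) (ha : a ∉ t) :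
    (υ.part a).erase a ∈ insert ∅ (υ.restrict (subset_insert a t)).parts := by
  rcases ((υ.part a).erase a).eq_empty_or_nonempty with h | h
  · exact h ▸ mem_insert_self _ _
  · exact mem_insert_of_mem ((υ.mem_restrict_insert_parts ha).2
      ⟨h, _, υ.part_mem.2 (mem_insert_self a t), rfl⟩)

lemma insertInto_restrict (υ : Finpartition (insert a t)) (ha : a ∉ t) :
    (υ.restrict (subset_insert a t)).insertInto ha (υ.erase_part_mem_insert_empty ha) = υ := by
  have hpa : insert a ((υ.part a).erase a) = υ.part a :=
    insert_erase (υ.mem_part_self.2 (mem_insert_self a t))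
  have hpart : υ.part a ∈ υ.parts := υ.part_mem.2 (mem_insert_self a t)
  ext C
  rw [insertInto_parts, hpa, mem_insert, mem_erase, mem_restrict_insert_parts _ ha]
  constructor
  · rintro (rfl | ⟨hne, -, D, hD, rfl⟩)
    · exact hpart
    · by_cases haD : a ∈ D
      · rw [(υ.part_eq_of_mem hD haD)] at hne
        exact absurd rfl hne
      · rwa [erase_eq_of_notMem haD]
  · intro hC
    by_cases haC : a ∈ C
    · exact Or.inl (υ.part_eq_of_mem hC haC).symm
    refine Or.inr ⟨fun hCa => ?_, υ.nonempty_of_mem_parts hC, C, hC, erase_eq_of_notMem haC⟩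
    obtain ⟨c, hc⟩ := υ.nonempty_of_mem_parts hC
    have hcpart : c ∈ υ.part a := mem_of_mem_erase (hCa ▸ hc)
    exact haC (υ.eq_of_mem_parts hC hpart hc hcpart ▸ υ.mem_part_self.2 (mem_insert_self a t))

lemma sum_card_parts_insert {M : Type*} [AddCommMonoid M] (ha : a ∉ t) (f : ℕ → M) :
    ∑ υ : Finpartition (insert a t), f #υ.parts =
      ∑ υ : Finpartition t, (f (#υ.parts + 1) + #υ.parts • f #υ.parts) := by
  calc ∑ υ : Finpartition (insert a t), f #υ.parts
      = ∑ υ : Finpartition t, ∑ B ∈ insert ∅ υ.parts, f (#(υ.parts.erase B) + 1) := by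
        rw [sum_sigma']
        refine sum_bij' (fun υ _ => ⟨υ.restrict (subset_insert a t), (υ.part a).erase a⟩)
          (fun p hp => p.1.insertInto ha (mem_sigma.1 hp).2) (fun υ _ => ?_) (fun _ _ => mem_univ _)
          (fun υ _ => υ.insertInto_restrict ha) (fun p hp => ?_) (fun υ _ => ?_)
        · exact mem_sigma.2 ⟨mem_univ _, υ.erase_part_mem_insert_empty ha⟩
        · obtain ⟨υ, B⟩ := p
          have hB := (mem_sigma.1 hp).2
          have haB : a ∉ B := fun h => ha (υ.subset_of_mem_insert_empty_parts hB h)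
          refine Sigma.ext (υ.restrict_insertInto ha hB) (heq_of_eq ?_)
          rw [part_insertInto, erase_insert haB]
        · conv_lhs => rw [← υ.insertInto_restrict ha]
          rw [card_insertInto_parts]
    _ = ∑ υ : Finpartition t, (f (#υ.parts + 1) + #υ.parts • f #υ.parts) := by
        refine sum_congr rfl fun υ _ => ?_
        rw [sum_insert υ.empty_notMem_parts, erase_eq_of_notMem υ.empty_notMem_parts,
          sum_congr rfl fun B hB => by rw [card_erase_add_one hB], sum_const]

lemma sum_card_parts_empty {M : Type*} [AddCommMonoid M] (f : ℕ → M) :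
    ∑ υ : Finpartition (∅ : Finset β), f #υ.parts = f 0 := by
  have : Unique (Finpartition (∅ : Finset β)) :=
    inferInstanceAs (Unique (Finpartition (⊥ : Finset β)))
  rw [Fintype.sum_unique]
  congr 1
  exact Nat.eq_zero_of_le_zero (card_parts_le_card _)

end Insert

end Finpartition

/-- The Möbius function `μ(σ, 1̂) = (-1)^(k-1) (k-1)!` of the partition lattice, for `σ` with `k`
blocks. Truncated subtraction makes its value at `k = 0` equal to `1`, matching the single
(empty) partition of `∅`. -/
def partitionMoebius (R : Type*) [CommRing R] (k : ℕ) : R :=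
  (Nat.factorial (k - 1) : R) * (-1 : R) ^ (k - 1)

lemma partitionMoebius_succ_add_nsmul {R : Type*} [CommRing R] {k : ℕ} (hk : k ≠ 0) :
    partitionMoebius R (k + 1) + k • partitionMoebius R k = 0 := by
  obtain ⟨j, rfl⟩ := Nat.exists_eq_succ_of_ne_zero hk
  simp only [partitionMoebius, Nat.succ_sub_one, Nat.factorial_succ, nsmul_eq_mul, Nat.cast_mul,
    pow_succ]
  push_cast
  ring

namespace Finpartition

lemma sum_partitionMoebius {R : Type*} [CommRing R] {β : Type*} [DecidableEq β] (S : Finset β) :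
    ∑ υ : Finpartition S, partitionMoebius R #υ.parts = if #S ≤ 1 then 1 else 0 := by
  induction S using Finset.induction_on with
  | empty =>
    rw [sum_card_parts_empty (partitionMoebius R)]
    simp [partitionMoebius]
  | insert a t ha _ =>
    rw [sum_card_parts_insert ha]
    rcases t.eq_empty_or_nonempty with rfl | ht
    · rw [sum_card_parts_empty fun k => partitionMoebius R (k + 1) + k • partitionMoebius R k]
      simp [partitionMoebius]
    · rw [if_neg (by rw [card_insert_of_notMem ha]; have := ht.card_pos; omega)]
      exact sum_eq_zero fun υ _ => partitionMoebius_succ_add_nsmul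
        (card_ne_zero.2 (υ.parts_nonempty ht.ne_empty))

section Join

variable {α : Type*} [DecidableEq α] {s : Finset α}

lemma le_iff_forall_part_subset {P Q : Finpartition s} : P ≤ Q ↔ ∀ a ∈ s, P.part a ⊆ Q.part a := by
  constructor
  · intro h a ha
    obtain ⟨T, hT, hPT⟩ := h (P.part_mem.2 ha)
    rw [Q.part_eq_of_mem hT (hPT (P.mem_part_self.2 ha))]
    exact hPT
  · intro h B hB
    obtain ⟨a, ha⟩ := P.nonempty_of_mem_parts hB
    refine ⟨Q.part a, Q.part_mem.2 (P.le hB ha), ?_⟩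
    rw [← P.part_eq_of_mem hB ha]
    exact h a (P.le hB ha)

lemma card_parts_le_one_iff (P : Finpartition s) :
    #P.parts ≤ 1 ↔ ∀ a ∈ s, ∀ b ∈ s, b ∈ P.part a := by
  rw [card_le_one]
  constructor
  · intro h a ha b hb
    rw [h _ (P.part_mem.2 ha) _ (P.part_mem.2 hb)]
    exact P.mem_part_self.2 hb
  · intro h B hB C hC
    obtain ⟨a, ha⟩ := P.nonempty_of_mem_parts hB
    obtain ⟨b, hb⟩ := P.nonempty_of_mem_parts hC
    rw [← P.part_eq_of_mem hB ha, ← P.part_eq_of_mem hC hb]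
    exact (P.part_eq_of_mem (P.part_mem.2 (P.le hB ha)) (h a (P.le hB ha) b (P.le hC hb))).symm

lemma part_eq_part_of_le {P Q : Finpartition s} (h : P ≤ Q) {B : Finset α} (hB : B ∈ P.parts)
    {a b : α} (ha : a ∈ B) (hb : b ∈ B) : Q.part a = Q.part b := by
  obtain ⟨T, hT, hBT⟩ := h hB
  rw [Q.part_eq_of_mem hT (hBT ha), Q.part_eq_of_mem hT (hBT hb)]

def joinRel (ρ π : Finpartition s) (a b : α) : Prop :=
  (∃ B ∈ ρ.parts, a ∈ B ∧ b ∈ B) ∨ ∃ B ∈ π.parts, a ∈ B ∧ b ∈ B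

variable {γ : Type*} [Fintype γ] [DecidableEq γ]

noncomputable instance : Max (Finpartition (univ : Finset γ)) where
  max ρ π := ofSetoid (Relation.EqvGen.setoid (joinRel ρ π))

lemma mem_part_sup_iff {ρ π : Finpartition (univ : Finset γ)} {a b : γ} :
    b ∈ (ρ ⊔ π).part a ↔ Relation.EqvGen (joinRel ρ π) a b :=
  mem_part_ofSetoid_iff_rel

noncomputable instance : SemilatticeSup (Finpartition (univ : Finset γ)) where
  sup ρ π := ρ ⊔ π
  le_sup_left ρ π := le_iff_forall_part_subset.2 fun a _ b hb => mem_part_sup_iff.2 <|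
    .rel _ _ <| .inl ⟨ρ.part a, ρ.part_mem.2 (mem_univ a), ρ.mem_part_self.2 (mem_univ a), hb⟩
  le_sup_right ρ π := le_iff_forall_part_subset.2 fun a _ b hb => mem_part_sup_iff.2 <|
    .rel _ _ <| .inr ⟨π.part a, π.part_mem.2 (mem_univ a), π.mem_part_self.2 (mem_univ a), hb⟩
  sup_le ρ π σ hρ hπ := le_iff_forall_part_subset.2 fun a _ b hb => by
    have hab : σ.part a = σ.part b := (Setoid.ker σ.part).iseqv.eqvGen_iff.1 <|
      (mem_part_sup_iff.1 hb).mono fun x y hxy => hxy.elim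
        (fun ⟨_, hB, hx, hy⟩ => part_eq_part_of_le hρ hB hx hy)
        (fun ⟨_, hB, hx, hy⟩ => part_eq_part_of_le hπ hB hx hy)
    rw [hab]
    exact σ.mem_part_self.2 (mem_univ b)

lemma card_sup_parts_le_one_iff (ρ π : Finpartition (univ : Finset γ)) :
    #(ρ ⊔ π).parts ≤ 1 ↔ ∀ a b, Relation.EqvGen (joinRel ρ π) a b := by
  simp [card_parts_le_one_iff, mem_part_sup_iff]

lemma sum_partitionMoebius_filter_le_and_le {R : Type*} [CommRing R]
    (ρ π : Finpartition (univ : Finset γ)) :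
    ∑ σ ∈ univ.filter (fun σ => ρ ≤ σ ∧ π ≤ σ), partitionMoebius R #σ.parts =
      if ∀ a b, Relation.EqvGen (joinRel ρ π) a b then 1 else 0 := by
  rw [filter_congr fun σ _ => sup_le_iff.symm, sum_filter_le_eq_sum_merge]
  simp_rw [card_merge, sum_partitionMoebius, card_sup_parts_le_one_iff]

end Join

end Finpartition

/-- McCullagh's formula: `κ_π = Σ_{ρ : ρ∨π = 1̂} Π_{C∈ρ} κ((X_j)_{j∈C})`, where
`κ` is the joint-cumulant functional determined by the moment–cumulant relation. -/
theorem mcCullagh_formula {R : Type*} [CommRing R]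
    (i : ℕ) (m κ : Finset (Fin i) → R)
    (hmc : ∀ C : Finset (Fin i), C.Nonempty →
      m C = ∑ σ : Finpartition C, ∏ D ∈ σ.parts, κ D)
    (π : Finpartition (Finset.univ : Finset (Fin i))) :
    genCumulant m π =
      ∑ ρ ∈ (Finset.univ : Finset (Finpartition (Finset.univ : Finset (Fin i)))).filter
          (fun ρ => JoinEqTop ρ π),
        ∏ C ∈ ρ.parts, κ C := by
  have hmoments : ∀ σ : Finpartition (univ : Finset (Fin i)),
      ∏ T ∈ σ.parts, m T = ∑ ρ ∈ univ.filter (· ≤ σ), ∏ C ∈ ρ.parts, κ C := fun σ => by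
    rw [prod_congr rfl fun T hT => hmc T (σ.nonempty_of_mem_parts hT)]
    exact σ.prod_sum_eq_sum_filter_le κ
  calc genCumulant m π
      = ∑ σ ∈ univ.filter (π ≤ ·), partitionMoebius R #σ.parts * ∏ T ∈ σ.parts, m T := by
        rw [π.sum_filter_le_eq_sum_merge]
        simp only [Finpartition.card_merge, Finpartition.prod_merge]
        rfl
    _ = ∑ σ ∈ univ.filter (π ≤ ·), ∑ ρ ∈ univ.filter (· ≤ σ),
          partitionMoebius R #σ.parts * ∏ C ∈ ρ.parts, κ C := by
        simp_rw [hmoments, mul_sum]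
    _ = ∑ ρ, ∑ σ ∈ univ.filter (fun σ => ρ ≤ σ ∧ π ≤ σ),
          partitionMoebius R #σ.parts * ∏ C ∈ ρ.parts, κ C :=
        sum_comm' fun σ ρ => by simp [and_comm]
    _ = ∑ ρ, if JoinEqTop ρ π then ∏ C ∈ ρ.parts, κ C else 0 := by
        simp_rw [← sum_mul, Finpartition.sum_partitionMoebius_filter_le_and_le, ite_mul, one_mul,
          zero_mul]
        -- `JoinEqTop ρ π` unfolds to the same condition; only the `Decidable` instances differ.
        exact sum_congr rfl fun ρ _ => if_congr Iff.rfl rfl rfl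
    _ = _ := (sum_filter _ _).symm
end

section
/- The polykay k_{2,2} is unbiased for κ_2²: if X_1,...,X_n are i.i.d. with n ≥ 4 and s_r = Σ X_i^r, then E[ (−s_4 + s_2²)/(n)_2 − 2(2s_4 − s_2² − 2s_3 s_1 + s_1² s_2)/(n)_3 + (−6s_4 + 8s_3 s_1 + 3s_2² − 6s_1² s_2 + s_1⁴)/(n)_4 ] = κ_2², where κ_2 = a_2 − a_1² is the second cumulant (variance) and (n)_k = n(n−1)···(n−k+1). -/
open Finset

section Aux

variable {A K : Type*} [CommRing A] [Field K] {n : ℕ} (X : Fin n → A)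

/-- Sum over pairs of distinct indices. -/
def D2 (r t : ℕ) : A := ∑ i, ∑ j ∈ univ.erase i, X i ^ r * X j ^ t

/-- Sum over triples of distinct indices. -/
def D3 (r t u : ℕ) : A :=
  ∑ i, ∑ j ∈ univ.erase i, ∑ k ∈ (univ.erase i).erase j, X i ^ r * X j ^ t * X k ^ u

/-- Sum over quadruples of distinct indices. -/
def D4 (r t u v : ℕ) : A :=
  ∑ i, ∑ j ∈ univ.erase i, ∑ k ∈ (univ.erase i).erase j,
    ∑ l ∈ ((univ.erase i).erase j).erase k, X i ^ r * X j ^ t * X k ^ u * X l ^ v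

variable (s : ℕ → A)

lemma L1 (hs : ∀ r, s r = ∑ i, X i ^ r) (r t : ℕ) : s r * s t = s (r + t) + D2 X r t := by
  rw [hs r, hs t, hs (r + t), Finset.sum_mul, D2, ← Finset.sum_add_distrib]
  refine Finset.sum_congr rfl fun i _ => ?_
  rw [← Finset.add_sum_erase _ (fun j => X j ^ t) (mem_univ i), mul_add, pow_add,
    Finset.mul_sum]

lemma L2 (hs : ∀ r, s r = ∑ i, X i ^ r) (r t u : ℕ) :
    D2 X r t * s u = D2 X (r + u) t + D2 X r (t + u) + D3 X r t u := by
  rw [hs u, D2, D2, D2, D3, Finset.sum_mul, ← Finset.sum_add_distrib, ← Finset.sum_add_distrib]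
  refine Finset.sum_congr rfl fun i _ => ?_
  rw [Finset.sum_mul, ← Finset.sum_add_distrib, ← Finset.sum_add_distrib]
  refine Finset.sum_congr rfl fun j hj => ?_
  rw [← Finset.add_sum_erase _ (fun k => X k ^ u) (mem_univ i),
    ← Finset.add_sum_erase _ (fun k => X k ^ u) (mem_erase.2 ⟨(mem_erase.1 hj).1, mem_univ j⟩)]
  rw [mul_add, mul_add, Finset.mul_sum]
  ring

lemma L3 (hs : ∀ r, s r = ∑ i, X i ^ r) (r t u v : ℕ) :
    D3 X r t u * s v =
      D3 X (r + v) t u + D3 X r (t + v) u + D3 X r t (u + v) + D4 X r t u v := by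
  rw [hs v, D3, D3, D3, D3, D4, Finset.sum_mul, ← Finset.sum_add_distrib,
    ← Finset.sum_add_distrib, ← Finset.sum_add_distrib]
  refine Finset.sum_congr rfl fun i _ => ?_
  rw [Finset.sum_mul, ← Finset.sum_add_distrib, ← Finset.sum_add_distrib,
    ← Finset.sum_add_distrib]
  refine Finset.sum_congr rfl fun j hj => ?_
  rw [Finset.sum_mul, ← Finset.sum_add_distrib, ← Finset.sum_add_distrib,
    ← Finset.sum_add_distrib]
  refine Finset.sum_congr rfl fun k hk => ?_
  have hki : k ≠ i := (mem_erase.1 (mem_of_mem_erase hk)).1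
  have hkj : k ≠ j := (mem_erase.1 hk).1
  have hji : j ≠ i := (mem_erase.1 hj).1
  rw [← Finset.add_sum_erase _ (fun l => X l ^ v) (mem_univ i),
    ← Finset.add_sum_erase _ (fun l => X l ^ v)
      (mem_erase.2 ⟨hji, mem_univ j⟩),
    ← Finset.add_sum_erase _ (fun l => X l ^ v)
      (mem_erase.2 ⟨hkj, mem_erase.2 ⟨hki, mem_univ k⟩⟩)]
  rw [mul_add, mul_add, mul_add, Finset.mul_sum]
  ring

end Aux

lemma prod_support_pair {M : Type*} [CommMonoid M] {n : ℕ} (f : Fin n → M) {i j : Fin n}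
    (hij : i ≠ j) (h : ∀ k, k ≠ i → k ≠ j → f k = 1) : ∏ k, f k = f i * f j := by
  rw [← Finset.prod_subset (Finset.subset_univ ({i, j} : Finset (Fin n)))
      (fun x _ hx => h x (fun h' => hx (by simp [h'])) (fun h' => hx (by simp [h'])))]
  exact Finset.prod_pair hij

lemma prod_support_triple {M : Type*} [CommMonoid M] {n : ℕ} (f : Fin n → M) {i j k : Fin n}
    (hij : i ≠ j) (hik : i ≠ k) (hjk : j ≠ k)
    (h : ∀ l, l ≠ i → l ≠ j → l ≠ k → f l = 1) : ∏ l, f l = f i * f j * f k := by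
  rw [← Finset.prod_subset (Finset.subset_univ ({i, j, k} : Finset (Fin n)))
      (fun x _ hx => h x (fun h' => hx (by simp [h'])) (fun h' => hx (by simp [h']))
        (fun h' => hx (by simp [h'])))]
  rw [show ({i, j, k} : Finset (Fin n)) = insert i (insert j {k}) from rfl,
    Finset.prod_insert (by simp [hij, hik]), Finset.prod_insert (by simp [hjk]),
    Finset.prod_singleton, mul_assoc]

lemma prod_support_quad {M : Type*} [CommMonoid M] {n : ℕ} (f : Fin n → M) {i j k l : Fin n}
    (hij : i ≠ j) (hik : i ≠ k) (hil : i ≠ l) (hjk : j ≠ k) (hjl : j ≠ l) (hkl : k ≠ l)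
    (h : ∀ m, m ≠ i → m ≠ j → m ≠ k → m ≠ l → f m = 1) :
    ∏ m, f m = f i * f j * f k * f l := by
  rw [← Finset.prod_subset (Finset.subset_univ ({i, j, k, l} : Finset (Fin n)))
      (fun x _ hx => h x (fun h' => hx (by simp [h'])) (fun h' => hx (by simp [h']))
        (fun h' => hx (by simp [h'])) (fun h' => hx (by simp [h'])))]
  rw [show ({i, j, k, l} : Finset (Fin n)) = insert i (insert j (insert k {l})) from rfl,
    Finset.prod_insert (by simp [hij, hik, hil]), Finset.prod_insert (by simp [hjk, hjl]),
    Finset.prod_insert (by simp [hkl]), Finset.prod_singleton, mul_assoc, mul_assoc]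

section Exp

variable {A K : Type*} [CommRing A] [Field K] {n : ℕ} (X : Fin n → A)
  (E : A →+ K) (a : ℕ → K)

lemma Em2 (ha0 : a 0 = 1) (hE : ∀ g : Fin n → ℕ, E (∏ j, X j ^ g j) = ∏ j, a (g j))
    {i j : Fin n} (hij : j ≠ i) (r t : ℕ) : E (X i ^ r * X j ^ t) = a r * a t := by
  have h := hE (fun k => if k = i then r else if k = j then t else 0)
  rw [prod_support_pair (fun k => X k ^ _) hij.symm
        (fun k hk1 hk2 => by simp [hk1, hk2]),
      prod_support_pair (fun k => a _) hij.symm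
        (fun k hk1 hk2 => by simp [hk1, hk2, ha0])] at h
  simpa [hij] using h

lemma Em3 (ha0 : a 0 = 1) (hE : ∀ g : Fin n → ℕ, E (∏ j, X j ^ g j) = ∏ j, a (g j))
    {i j k : Fin n} (hji : j ≠ i) (hki : k ≠ i) (hkj : k ≠ j) (r t u : ℕ) :
    E (X i ^ r * X j ^ t * X k ^ u) = a r * a t * a u := by
  have h := hE (fun m => if m = i then r else if m = j then t else if m = k then u else 0)
  rw [prod_support_triple (fun m => X m ^ _) hji.symm hki.symm hkj.symm
        (fun m h1 h2 h3 => by simp [h1, h2, h3]),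
      prod_support_triple (fun m => a _) hji.symm hki.symm hkj.symm
        (fun m h1 h2 h3 => by simp [h1, h2, h3, ha0])] at h
  simpa [hji, hki, hkj] using h

lemma Em4 (ha0 : a 0 = 1) (hE : ∀ g : Fin n → ℕ, E (∏ j, X j ^ g j) = ∏ j, a (g j))
    {i j k l : Fin n} (hji : j ≠ i) (hki : k ≠ i) (hkj : k ≠ j)
    (hli : l ≠ i) (hlj : l ≠ j) (hlk : l ≠ k) (r t u v : ℕ) :
    E (X i ^ r * X j ^ t * X k ^ u * X l ^ v) = a r * a t * a u * a v := by
  have h := hE (fun m => if m = i then r else if m = j then t else if m = k then u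
    else if m = l then v else 0)
  rw [prod_support_quad (fun m => X m ^ _) hji.symm hki.symm hli.symm hkj.symm hlj.symm hlk.symm
        (fun m h1 h2 h3 h4 => by simp [h1, h2, h3, h4]),
      prod_support_quad (fun m => a _) hji.symm hki.symm hli.symm hkj.symm hlj.symm hlk.symm
        (fun m h1 h2 h3 h4 => by simp [h1, h2, h3, h4, ha0])] at h
  simpa [hji, hki, hkj, hli, hlj, hlk] using h

lemma ED2 (hn : 1 ≤ n) (ha0 : a 0 = 1)
    (hE : ∀ g : Fin n → ℕ, E (∏ j, X j ^ g j) = ∏ j, a (g j)) (r t : ℕ) :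
    E (D2 X r t) = (n : K) * ((n : K) - 1) * (a r * a t) := by
  have hinner : ∀ i : Fin n, E (∑ j ∈ univ.erase i, X i ^ r * X j ^ t)
      = ((n - 1 : ℕ) : K) * (a r * a t) := fun i => by
    rw [map_sum, Finset.sum_congr rfl fun j hj => Em2 X E a ha0 hE (mem_erase.1 hj).1 r t,
      Finset.sum_const, Finset.card_erase_of_mem (mem_univ i), card_univ, Fintype.card_fin,
      nsmul_eq_mul]
  rw [D2, map_sum, Finset.sum_congr rfl fun i _ => hinner i, Finset.sum_const, card_univ,
    Fintype.card_fin, nsmul_eq_mul, Nat.cast_sub hn, Nat.cast_one]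
  ring

lemma ED3 (hn : 2 ≤ n) (ha0 : a 0 = 1)
    (hE : ∀ g : Fin n → ℕ, E (∏ j, X j ^ g j) = ∏ j, a (g j)) (r t u : ℕ) :
    E (D3 X r t u) = (n : K) * ((n : K) - 1) * ((n : K) - 2) * (a r * a t * a u) := by
  have hin2 : ∀ (i : Fin n) (j : Fin n), j ∈ univ.erase i →
      E (∑ k ∈ (univ.erase i).erase j, X i ^ r * X j ^ t * X k ^ u)
      = ((n - 2 : ℕ) : K) * (a r * a t * a u) := fun i j hj => by
    rw [map_sum, Finset.sum_congr rfl fun k hk => Em3 X E a ha0 hE (mem_erase.1 hj).1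
        (mem_erase.1 (mem_of_mem_erase hk)).1 (mem_erase.1 hk).1 r t u,
      Finset.sum_const, Finset.card_erase_of_mem hj, Finset.card_erase_of_mem (mem_univ i),
      card_univ, Fintype.card_fin, nsmul_eq_mul, show n - 1 - 1 = n - 2 from by omega]
  have hinner : ∀ i : Fin n,
      E (∑ j ∈ univ.erase i, ∑ k ∈ (univ.erase i).erase j, X i ^ r * X j ^ t * X k ^ u)
      = ((n - 1 : ℕ) : K) * (((n - 2 : ℕ) : K) * (a r * a t * a u)) := fun i => by
    rw [map_sum, Finset.sum_congr rfl (hin2 i), Finset.sum_const,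
      Finset.card_erase_of_mem (mem_univ i), card_univ, Fintype.card_fin, nsmul_eq_mul]
  rw [D3, map_sum, Finset.sum_congr rfl fun i _ => hinner i, Finset.sum_const, card_univ,
    Fintype.card_fin, nsmul_eq_mul, Nat.cast_sub (by omega : 1 ≤ n), Nat.cast_sub hn,
    Nat.cast_one, Nat.cast_two]
  ring

lemma ED4 (hn : 3 ≤ n) (ha0 : a 0 = 1)
    (hE : ∀ g : Fin n → ℕ, E (∏ j, X j ^ g j) = ∏ j, a (g j)) (r t u v : ℕ) :
    E (D4 X r t u v) =
      (n : K) * ((n : K) - 1) * ((n : K) - 2) * ((n : K) - 3) * (a r * a t * a u * a v) := by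
  have hin3 : ∀ (i j k : Fin n), j ∈ univ.erase i → k ∈ (univ.erase i).erase j →
      E (∑ l ∈ ((univ.erase i).erase j).erase k, X i ^ r * X j ^ t * X k ^ u * X l ^ v)
      = ((n - 3 : ℕ) : K) * (a r * a t * a u * a v) := fun i j k hj hk => by
    rw [map_sum, Finset.sum_congr rfl fun l hl => Em4 X E a ha0 hE (mem_erase.1 hj).1
        (mem_erase.1 (mem_of_mem_erase hk)).1 (mem_erase.1 hk).1
        (mem_erase.1 (mem_of_mem_erase (mem_of_mem_erase hl))).1
        (mem_erase.1 (mem_of_mem_erase hl)).1 (mem_erase.1 hl).1 r t u v,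
      Finset.sum_const, Finset.card_erase_of_mem hk, Finset.card_erase_of_mem hj,
      Finset.card_erase_of_mem (mem_univ i), card_univ, Fintype.card_fin, nsmul_eq_mul,
      show n - 1 - 1 - 1 = n - 3 from by omega]
  have hin2 : ∀ (i j : Fin n), j ∈ univ.erase i →
      E (∑ k ∈ (univ.erase i).erase j, ∑ l ∈ ((univ.erase i).erase j).erase k,
          X i ^ r * X j ^ t * X k ^ u * X l ^ v)
      = ((n - 2 : ℕ) : K) * (((n - 3 : ℕ) : K) * (a r * a t * a u * a v)) := fun i j hj => by
    rw [map_sum, Finset.sum_congr rfl (hin3 i j · hj), Finset.sum_const,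
      Finset.card_erase_of_mem hj, Finset.card_erase_of_mem (mem_univ i), card_univ,
      Fintype.card_fin, nsmul_eq_mul, show n - 1 - 1 = n - 2 from by omega]
  have hinner : ∀ i : Fin n,
      E (∑ j ∈ univ.erase i, ∑ k ∈ (univ.erase i).erase j,
          ∑ l ∈ ((univ.erase i).erase j).erase k, X i ^ r * X j ^ t * X k ^ u * X l ^ v)
      = ((n - 1 : ℕ) : K) * (((n - 2 : ℕ) : K) * (((n - 3 : ℕ) : K)
          * (a r * a t * a u * a v))) := fun i => by
    rw [map_sum, Finset.sum_congr rfl (hin2 i), Finset.sum_const,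
      Finset.card_erase_of_mem (mem_univ i), card_univ, Fintype.card_fin, nsmul_eq_mul]
  rw [D4, map_sum, Finset.sum_congr rfl fun i _ => hinner i, Finset.sum_const, card_univ,
    Fintype.card_fin, nsmul_eq_mul, Nat.cast_sub (by omega : 1 ≤ n),
    Nat.cast_sub (by omega : 2 ≤ n), Nat.cast_sub hn, Nat.cast_one, Nat.cast_two,
    Nat.cast_ofNat]
  ring

end Exp

/-- Unbiasedness of the polykay `k_{2,2}`: for i.i.d. `X_1,…,X_n`, `n ≥ 4`
(formalized by an abstract expectation `E` factorizing over distinct indices,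
with marginal moments `a_m`), with `s_r = Σ_i X_i^r`, the expectation of
`(−s_4+s_2²)/(n)_2 − 2(2s_4−s_2²−2s_3s_1+s_1²s_2)/(n)_3
  + (−6s_4+8s_3s_1+3s_2²−6s_1²s_2+s_1⁴)/(n)_4`
equals `κ_2² = (a_2 − a_1²)²`. -/
theorem polykay22_unbiased {A K : Type*} [CommRing A] [Field K] [CharZero K]
    (n : ℕ) (hn : 4 ≤ n) (X : Fin n → A) (E : A →+ K) (a : ℕ → K) (ha0 : a 0 = 1)
    (hE : ∀ g : Fin n → ℕ, E (∏ j, X j ^ g j) = ∏ j, a (g j))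
    (s : ℕ → A) (hs : ∀ r, s r = ∑ i, X i ^ r) :
    E (-s 4 + s 2 ^ 2) / ((n : K) * ((n : K) - 1)) -
      2 * E (2 * s 4 - s 2 ^ 2 - 2 * (s 3 * s 1) + s 1 ^ 2 * s 2) /
        ((n : K) * ((n : K) - 1) * ((n : K) - 2)) +
      E (-6 * s 4 + 8 * (s 3 * s 1) + 3 * s 2 ^ 2 - 6 * (s 1 ^ 2 * s 2) + s 1 ^ 4) /
        ((n : K) * ((n : K) - 1) * ((n : K) - 2) * ((n : K) - 3)) =
      (a 2 - a 1 ^ 2) ^ 2 := by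
  -- A-level structural identities
  have hA : s 2 * s 2 = s 4 + D2 X 2 2 := L1 X s hs 2 2
  have hB : s 3 * s 1 = s 4 + D2 X 3 1 := L1 X s hs 3 1
  have hC : s 1 * s 1 = s 2 + D2 X 1 1 := L1 X s hs 1 1
  have hG : s 2 * s 1 = s 3 + D2 X 2 1 := L1 X s hs 2 1
  have hE2 : D2 X 1 1 * s 2 = D2 X 3 1 + D2 X 1 3 + D3 X 1 1 2 := L2 X s hs 1 1 2
  have hH : D2 X 2 1 * s 1 = D2 X 3 1 + D2 X 2 2 + D3 X 2 1 1 := L2 X s hs 2 1 1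
  have hI : D2 X 1 2 * s 1 = D2 X 2 2 + D2 X 1 3 + D3 X 1 2 1 := L2 X s hs 1 2 1
  have hJ : D2 X 1 1 * s 1 = D2 X 2 1 + D2 X 1 2 + D3 X 1 1 1 := L2 X s hs 1 1 1
  have hK : D3 X 1 1 1 * s 1 = D3 X 2 1 1 + D3 X 1 2 1 + D3 X 1 1 2 + D4 X 1 1 1 1 :=
    L3 X s hs 1 1 1 1
  have hs1s1s2 : s 1 ^ 2 * s 2
      = s 4 + D2 X 2 2 + D2 X 3 1 + D2 X 1 3 + D3 X 1 1 2 := by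
    linear_combination (s 2) * hC + hA + hE2
  have hs1p4 : s 1 ^ 4 = s 4 + 3 * D2 X 3 1 + D2 X 1 3 + 3 * D2 X 2 2 + 3 * D3 X 2 1 1
      + 2 * D3 X 1 2 1 + D3 X 1 1 2 + D4 X 1 1 1 1 := by
    linear_combination (s 1 * s 1) * hC + (s 1) * hG + (s 1) * hJ + hB + 2 * hH + hI + hK
  have n1 : -s 4 + s 2 ^ 2 = D2 X 2 2 := by linear_combination hA
  have n2 : 2 * s 4 - s 2 ^ 2 - 2 * (s 3 * s 1) + s 1 ^ 2 * s 2
      = -D2 X 3 1 + D2 X 1 3 + D3 X 1 1 2 := by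
    linear_combination hs1s1s2 - hA - 2 * hB
  have n3 : -6 * s 4 + 8 * (s 3 * s 1) + 3 * s 2 ^ 2 - 6 * (s 1 ^ 2 * s 2) + s 1 ^ 4
      = 5 • D2 X 3 1 - 5 • D2 X 1 3 + 3 • D3 X 2 1 1 + 2 • D3 X 1 2 1 - 5 • D3 X 1 1 2
        + D4 X 1 1 1 1 := by
    simp only [nsmul_eq_mul, Nat.cast_ofNat]
    linear_combination 8 * hB + 3 * hA - 6 * hs1s1s2 + hs1p4
  -- expectations
  have En1 : E (-s 4 + s 2 ^ 2) = (n : K) * ((n : K) - 1) * (a 2 * a 2) := by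
    rw [n1, ED2 X E a (by omega) ha0 hE]
  have En2 : E (2 * s 4 - s 2 ^ 2 - 2 * (s 3 * s 1) + s 1 ^ 2 * s 2)
      = (n : K) * ((n : K) - 1) * ((n : K) - 2) * (a 1 * a 1 * a 2) := by
    rw [n2, map_add, map_add, map_neg, ED2 X E a (by omega) ha0 hE,
      ED2 X E a (by omega) ha0 hE, ED3 X E a (by omega) ha0 hE]
    ring
  have En3 : E (-6 * s 4 + 8 * (s 3 * s 1) + 3 * s 2 ^ 2 - 6 * (s 1 ^ 2 * s 2) + s 1 ^ 4)
      = (n : K) * ((n : K) - 1) * ((n : K) - 2) * ((n : K) - 3)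
        * (a 1 * a 1 * a 1 * a 1) := by
    rw [n3]
    simp only [map_add, map_sub, map_nsmul]
    simp only [nsmul_eq_mul, Nat.cast_ofNat]
    rw [ED2 X E a (by omega) ha0 hE, ED2 X E a (by omega) ha0 hE,
      ED3 X E a (by omega) ha0 hE, ED3 X E a (by omega) ha0 hE,
      ED3 X E a (by omega) ha0 hE, ED4 X E a (by omega) ha0 hE]
    ring
  rw [En1, En2, En3]
  have c0 : (n : K) ≠ 0 := Nat.cast_ne_zero.mpr (by omega)
  have c1 : (n : K) - 1 ≠ 0 := by
    rw [show (n : K) - 1 = ((n - 1 : ℕ) : K) by rw [Nat.cast_sub (by omega), Nat.cast_one]]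
    exact Nat.cast_ne_zero.mpr (by omega)
  have c2 : (n : K) - 2 ≠ 0 := by
    rw [show (n : K) - 2 = ((n - 2 : ℕ) : K) by rw [Nat.cast_sub (by omega), Nat.cast_two]]
    exact Nat.cast_ne_zero.mpr (by omega)
  have c3 : (n : K) - 3 ≠ 0 := by
    rw [show (n : K) - 3 = ((n - 3 : ℕ) : K) by
      rw [Nat.cast_sub (by omega), Nat.cast_ofNat]]
    exact Nat.cast_ne_zero.mpr (by omega)
  field_simp
  ring
end

section
/- The bivariate k-statistic k_{21} is unbiased: for an i.i.d. sample (X_1,Y_1),...,(X_n,Y_n) of a bivariate random vector (X,Y), n ≥ 3, with s_{p,q} = Σ_{i=1}^n X_i^p Y_i^q, E[(n² s_{2,1} − 2n s_{1,0} s_{1,1} − n s_{2,0} s_{0,1} + 2 s_{1,0}² s_{0,1})/(n(n−1)(n−2))] = κ_{21}, the joint cumulant κ(X, X, Y) = E[X²Y] − 2E[X]E[XY] − E[X²]E[Y] + 2E[X]²E[Y]. -/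
open Finset

/-- Unbiasedness of the bivariate `k`-statistic `k_{21}`: for an i.i.d. sample
`(X_1,Y_1),…,(X_n,Y_n)`, `n ≥ 3` (formalized by an abstract expectation `E`
factorizing over distinct indices, with joint moments `m_{pq} = E[X^p Y^q]`),
with `s_{p,q} = Σ_i X_i^p Y_i^q`,
`E[(n² s_{2,1} − 2n s_{1,0}s_{1,1} − n s_{2,0}s_{0,1} + 2 s_{1,0}² s_{0,1})
   /(n(n−1)(n−2))] = κ_{21}
 = E[X²Y] − 2E[X]E[XY] − E[X²]E[Y] + 2E[X]²E[Y]`. -/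
theorem kstat21_unbiased {A K : Type*} [CommRing A] [Field K] [CharZero K]
    (n : ℕ) (hn : 3 ≤ n) (X Y : Fin n → A) (E : A →+ K)
    (m : ℕ → ℕ → K) (hm00 : m 0 0 = 1)
    (hE : ∀ g h : Fin n → ℕ,
      E (∏ j, X j ^ g j * Y j ^ h j) = ∏ j, m (g j) (h j))
    (s : ℕ → ℕ → A) (hs : ∀ p q, s p q = ∑ i, X i ^ p * Y i ^ q) :
    E ((n : A) ^ 2 * s 2 1 - 2 * (n : A) * (s 1 0 * s 1 1) -
          (n : A) * (s 2 0 * s 0 1) + 2 * (s 1 0 ^ 2 * s 0 1)) /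
        ((n : K) * ((n : K) - 1) * ((n : K) - 2)) =
      m 2 1 - 2 * m 1 0 * m 1 1 - m 2 0 * m 0 1 + 2 * m 1 0 ^ 2 * m 0 1 := by
  classical
  -- key lemma: expectation of a product supported on a finite index set
  have key : ∀ (t : Finset (Fin n)) (g h : Fin n → ℕ),
      (∀ j ∉ t, g j = 0) → (∀ j ∉ t, h j = 0) →
      E (∏ j ∈ t, X j ^ g j * Y j ^ h j) = ∏ j ∈ t, m (g j) (h j) := by
    intro t g h hg hh
    have h1 : ∏ j ∈ t, X j ^ g j * Y j ^ h j = ∏ j, X j ^ g j * Y j ^ h j :=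
      Finset.prod_subset (Finset.subset_univ t)
        (fun x _ hx => by rw [hg x hx, hh x hx]; simp)
    have h2 : ∏ j ∈ t, m (g j) (h j) = ∏ j, m (g j) (h j) :=
      Finset.prod_subset (Finset.subset_univ t)
        (fun x _ hx => by rw [hg x hx, hh x hx, hm00])
    rw [h1, h2, hE]
  have single : ∀ (i : Fin n) (p q : ℕ), E (X i ^ p * Y i ^ q) = m p q := by
    intro i p q
    have := key {i} (fun j => if j = i then p else 0) (fun j => if j = i then q else 0)
      (by intro j hj; simp only [Finset.mem_singleton] at hj; simp [hj])
      (by intro j hj; simp only [Finset.mem_singleton] at hj; simp [hj])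
    simpa using this
  have pair : ∀ (i k : Fin n), i ≠ k → ∀ (p q p' q' : ℕ),
      E (X i ^ p * Y i ^ q * (X k ^ p' * Y k ^ q')) = m p q * m p' q' := by
    intro i k hik p q p' q'
    have := key {i, k} (fun j => if j = i then p else if j = k then p' else 0)
      (fun j => if j = i then q else if j = k then q' else 0)
      (by intro j hj; simp only [Finset.mem_insert, Finset.mem_singleton] at hj
          push_neg at hj; simp [hj.1, hj.2])
      (by intro j hj; simp only [Finset.mem_insert, Finset.mem_singleton] at hj
          push_neg at hj; simp [hj.1, hj.2])
    rw [Finset.prod_pair hik, Finset.prod_pair hik] at this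
    simpa [hik, hik.symm] using this
  have triple : ∀ (i j k : Fin n), i ≠ j → i ≠ k → j ≠ k → ∀ (p q p' q' p'' q'' : ℕ),
      E (X i ^ p * Y i ^ q * (X j ^ p' * Y j ^ q') * (X k ^ p'' * Y k ^ q'')) =
        m p q * m p' q' * m p'' q'' := by
    intro i j k hij hik hjk p q p' q' p'' q''
    have := key {i, j, k}
      (fun l => if l = i then p else if l = j then p' else if l = k then p'' else 0)
      (fun l => if l = i then q else if l = j then q' else if l = k then q'' else 0)
      (by intro l hl; simp only [Finset.mem_insert, Finset.mem_singleton] at hl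
          push_neg at hl; simp [hl.1, hl.2.1, hl.2.2])
      (by intro l hl; simp only [Finset.mem_insert, Finset.mem_singleton] at hl
          push_neg at hl; simp [hl.1, hl.2.1, hl.2.2])
    rw [Finset.prod_insert (by simp [hij, hik]), Finset.prod_insert (by simp [hjk]),
        Finset.prod_singleton, Finset.prod_insert (by simp [hij, hik]),
        Finset.prod_insert (by simp [hjk]), Finset.prod_singleton] at this
    simpa [hij, hik, hjk, hij.symm, hik.symm, hjk.symm, mul_assoc] using this
  have hn1 : 1 ≤ n := by omega
  have hn2 : 2 ≤ n := by omega
  have card1 : ∀ i : Fin n, ((Finset.univ.erase i).card = n - 1) := by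
    intro i; rw [Finset.card_erase_of_mem (Finset.mem_univ i)]; simp
  have card2 : ∀ i j : Fin n, i ≠ j →
      (((Finset.univ.erase i).erase j).card = n - 2) := by
    intro i j hij
    rw [Finset.card_erase_of_mem (by simp [hij.symm]), card1 i]
    omega
  -- e1
  have e1 : E (s 2 1) = (n : K) * m 2 1 := by
    rw [hs, map_sum]
    have : ∀ i : Fin n, E (X i ^ 2 * Y i ^ 1) = m 2 1 := fun i => single i 2 1
    rw [Finset.sum_congr rfl (fun i _ => this i)]
    simp [mul_comm]
  -- e2
  have e2 : E (s 1 0 * s 1 1) =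
      (n : K) * m 2 1 + (n : K) * ((n - 1 : ℕ) : K) * (m 1 0 * m 1 1) := by
    rw [hs, hs, Finset.sum_mul_sum, map_sum]
    have inner : ∀ i : Fin n,
        E (∑ k, X i ^ 1 * Y i ^ 0 * (X k ^ 1 * Y k ^ 1)) =
          m 2 1 + ((n - 1 : ℕ) : K) * (m 1 0 * m 1 1) := by
      intro i
      rw [map_sum, ← Finset.add_sum_erase _ _ (Finset.mem_univ i)]
      have hdiag : E (X i ^ 1 * Y i ^ 0 * (X i ^ 1 * Y i ^ 1)) = m 2 1 := by
        rw [show X i ^ 1 * Y i ^ 0 * (X i ^ 1 * Y i ^ 1) = X i ^ 2 * Y i ^ 1 by ring]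
        exact single i 2 1
      have hoff : ∀ k ∈ Finset.univ.erase i,
          E (X i ^ 1 * Y i ^ 0 * (X k ^ 1 * Y k ^ 1)) = m 1 0 * m 1 1 := by
        intro k hk
        exact pair i k (Finset.ne_of_mem_erase hk).symm 1 0 1 1
      rw [hdiag, Finset.sum_congr rfl hoff, Finset.sum_const, card1 i, nsmul_eq_mul]
    rw [Finset.sum_congr rfl (fun i _ => inner i), Finset.sum_const, Finset.card_univ,
      Fintype.card_fin, nsmul_eq_mul]
    ring
  -- e3
  have e3 : E (s 2 0 * s 0 1) =
      (n : K) * m 2 1 + (n : K) * ((n - 1 : ℕ) : K) * (m 2 0 * m 0 1) := by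
    rw [hs, hs, Finset.sum_mul_sum, map_sum]
    have inner : ∀ i : Fin n,
        E (∑ k, X i ^ 2 * Y i ^ 0 * (X k ^ 0 * Y k ^ 1)) =
          m 2 1 + ((n - 1 : ℕ) : K) * (m 2 0 * m 0 1) := by
      intro i
      rw [map_sum, ← Finset.add_sum_erase _ _ (Finset.mem_univ i)]
      have hdiag : E (X i ^ 2 * Y i ^ 0 * (X i ^ 0 * Y i ^ 1)) = m 2 1 := by
        rw [show X i ^ 2 * Y i ^ 0 * (X i ^ 0 * Y i ^ 1) = X i ^ 2 * Y i ^ 1 by ring]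
        exact single i 2 1
      have hoff : ∀ k ∈ Finset.univ.erase i,
          E (X i ^ 2 * Y i ^ 0 * (X k ^ 0 * Y k ^ 1)) = m 2 0 * m 0 1 := by
        intro k hk
        exact pair i k (Finset.ne_of_mem_erase hk).symm 2 0 0 1
      rw [hdiag, Finset.sum_congr rfl hoff, Finset.sum_const, card1 i, nsmul_eq_mul]
    rw [Finset.sum_congr rfl (fun i _ => inner i), Finset.sum_const, Finset.card_univ,
      Fintype.card_fin, nsmul_eq_mul]
    ring
  -- e4
  have e4 : E (s 1 0 ^ 2 * s 0 1) =
      (n : K) * (m 2 1 + ((n - 1 : ℕ) : K) * (m 2 0 * m 0 1)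
        + ((n - 1 : ℕ) : K) * (2 * (m 1 0 * m 1 1) + ((n - 2 : ℕ) : K) * (m 1 0 ^ 2 * m 0 1))) := by
    have expand : s 1 0 ^ 2 * s 0 1 =
        ∑ i, ∑ j, ∑ k, X i ^ 1 * Y i ^ 0 * (X j ^ 1 * Y j ^ 0) * (X k ^ 0 * Y k ^ 1) := by
      rw [hs, hs]
      rw [sq, Finset.sum_mul_sum, Finset.sum_mul]
      refine Finset.sum_congr rfl fun i _ => ?_
      rw [Finset.sum_mul]
      refine Finset.sum_congr rfl fun j _ => ?_
      rw [Finset.mul_sum]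
    rw [expand, map_sum]
    have inner : ∀ i : Fin n,
        E (∑ j, ∑ k, X i ^ 1 * Y i ^ 0 * (X j ^ 1 * Y j ^ 0) * (X k ^ 0 * Y k ^ 1)) =
          m 2 1 + ((n - 1 : ℕ) : K) * (m 2 0 * m 0 1)
            + ((n - 1 : ℕ) : K) * (2 * (m 1 0 * m 1 1) + ((n - 2 : ℕ) : K) * (m 1 0 ^ 2 * m 0 1)) := by
      intro i
      rw [map_sum, ← Finset.add_sum_erase _ _ (Finset.mem_univ i)]
      -- j = i case: E (∑ k, X i^2 * Y k)
      have hji : E (∑ k, X i ^ 1 * Y i ^ 0 * (X i ^ 1 * Y i ^ 0) * (X k ^ 0 * Y k ^ 1)) =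
          m 2 1 + ((n - 1 : ℕ) : K) * (m 2 0 * m 0 1) := by
        rw [map_sum, ← Finset.add_sum_erase _ _ (Finset.mem_univ i)]
        have hdiag : E (X i ^ 1 * Y i ^ 0 * (X i ^ 1 * Y i ^ 0) * (X i ^ 0 * Y i ^ 1)) = m 2 1 := by
          rw [show X i ^ 1 * Y i ^ 0 * (X i ^ 1 * Y i ^ 0) * (X i ^ 0 * Y i ^ 1)
              = X i ^ 2 * Y i ^ 1 by ring]
          exact single i 2 1
        have hoff : ∀ k ∈ Finset.univ.erase i,
            E (X i ^ 1 * Y i ^ 0 * (X i ^ 1 * Y i ^ 0) * (X k ^ 0 * Y k ^ 1)) = m 2 0 * m 0 1 := by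
          intro k hk
          rw [show X i ^ 1 * Y i ^ 0 * (X i ^ 1 * Y i ^ 0) * (X k ^ 0 * Y k ^ 1)
              = X i ^ 2 * Y i ^ 0 * (X k ^ 0 * Y k ^ 1) by ring]
          exact pair i k (Finset.ne_of_mem_erase hk).symm 2 0 0 1
        rw [hdiag, Finset.sum_congr rfl hoff, Finset.sum_const, card1 i, nsmul_eq_mul]
      -- j ≠ i case
      have hjne : ∀ j ∈ Finset.univ.erase i,
          E (∑ k, X i ^ 1 * Y i ^ 0 * (X j ^ 1 * Y j ^ 0) * (X k ^ 0 * Y k ^ 1)) =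
            2 * (m 1 0 * m 1 1) + ((n - 2 : ℕ) : K) * (m 1 0 ^ 2 * m 0 1) := by
        intro j hj
        have hji' : j ≠ i := Finset.ne_of_mem_erase hj
        rw [map_sum, ← Finset.add_sum_erase _ _ (Finset.mem_univ i)]
        have hji2 : j ∈ Finset.univ.erase i := hj
        rw [← Finset.add_sum_erase _ _ hji2]
        have hki : E (X i ^ 1 * Y i ^ 0 * (X j ^ 1 * Y j ^ 0) * (X i ^ 0 * Y i ^ 1)) =
            m 1 1 * m 1 0 := by
          rw [show X i ^ 1 * Y i ^ 0 * (X j ^ 1 * Y j ^ 0) * (X i ^ 0 * Y i ^ 1)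
              = X i ^ 1 * Y i ^ 1 * (X j ^ 1 * Y j ^ 0) by ring]
          exact pair i j hji'.symm 1 1 1 0
        have hkj : E (X i ^ 1 * Y i ^ 0 * (X j ^ 1 * Y j ^ 0) * (X j ^ 0 * Y j ^ 1)) =
            m 1 0 * m 1 1 := by
          rw [show X i ^ 1 * Y i ^ 0 * (X j ^ 1 * Y j ^ 0) * (X j ^ 0 * Y j ^ 1)
              = X i ^ 1 * Y i ^ 0 * (X j ^ 1 * Y j ^ 1) by ring]
          exact pair i j hji'.symm 1 0 1 1
        have hoff : ∀ k ∈ (Finset.univ.erase i).erase j,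
            E (X i ^ 1 * Y i ^ 0 * (X j ^ 1 * Y j ^ 0) * (X k ^ 0 * Y k ^ 1)) =
              m 1 0 * m 1 0 * m 0 1 := by
          intro k hk
          have hkj' : k ≠ j := Finset.ne_of_mem_erase hk
          have hki' : k ≠ i := Finset.ne_of_mem_erase (Finset.mem_of_mem_erase hk)
          exact triple i j k hji'.symm hki'.symm hkj'.symm 1 0 1 0 0 1
        rw [hki, hkj, Finset.sum_congr rfl hoff, Finset.sum_const, card2 i j hji'.symm,
          nsmul_eq_mul]
        ring
      rw [hji, Finset.sum_congr rfl hjne, Finset.sum_const, card1 i, nsmul_eq_mul]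
    rw [Finset.sum_congr rfl (fun i _ => inner i), Finset.sum_const, Finset.card_univ,
      Fintype.card_fin, nsmul_eq_mul]
  -- put it together
  have Enat : ∀ (k : ℕ) (x : A), E ((k : A) * x) = (k : K) * E x := by
    intro k x
    rw [← nsmul_eq_mul, map_nsmul, nsmul_eq_mul]
  have hnum : E ((n : A) ^ 2 * s 2 1 - 2 * (n : A) * (s 1 0 * s 1 1) -
      (n : A) * (s 2 0 * s 0 1) + 2 * (s 1 0 ^ 2 * s 0 1)) =
      ((n ^ 2 : ℕ) : K) * E (s 2 1) - ((2 * n : ℕ) : K) * E (s 1 0 * s 1 1) -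
      ((n : ℕ) : K) * E (s 2 0 * s 0 1) + ((2 : ℕ) : K) * E (s 1 0 ^ 2 * s 0 1) := by
    rw [show (n : A) ^ 2 * s 2 1 - 2 * (n : A) * (s 1 0 * s 1 1) -
        (n : A) * (s 2 0 * s 0 1) + 2 * (s 1 0 ^ 2 * s 0 1) =
        ((n ^ 2 : ℕ) : A) * s 2 1 - ((2 * n : ℕ) : A) * (s 1 0 * s 1 1) -
        ((n : ℕ) : A) * (s 2 0 * s 0 1) + ((2 : ℕ) : A) * (s 1 0 ^ 2 * s 0 1) by
      push_cast; ring]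
    rw [map_add, map_sub, map_sub, Enat, Enat, Enat, Enat]
  rw [hnum, e1, e2, e3, e4]
  have c1 : ((n - 1 : ℕ) : K) = (n : K) - 1 := by
    rw [Nat.cast_sub hn1]; norm_num
  have c2 : ((n - 2 : ℕ) : K) = (n : K) - 2 := by
    rw [Nat.cast_sub hn2]; norm_num
  have hz0 : (n : K) ≠ 0 := Nat.cast_ne_zero.mpr (by omega)
  have hz1 : (n : K) - 1 ≠ 0 := by
    rw [← c1]; exact Nat.cast_ne_zero.mpr (by omega)
  have hz2 : (n : K) - 2 ≠ 0 := by
    rw [← c2]; exact Nat.cast_ne_zero.mpr (by omega)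
  rw [c1, c2, div_eq_iff (by exact mul_ne_zero (mul_ne_zero hz0 hz1) hz2)]
  push_cast
  ring
end
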